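/- arXiv:1609.09182 — 7 statements merged into one kernel-verified Lean document; each statement's English description precedes it below -/
import Mathlib

section
/- In ℚ[[q]] one has the identity g_2 · g_3 = g_{2,3} + g_{3,2} + g_5 − (1/12)·g_3, where g_k(q) = Σ_{u,v ≥ 1} (v^{k-1}/(k-1)!) q^{uv} and g_{k_1,k_2}(q) = Σ_{0<u_1<u_2, v_1,v_2 ≥ 1} (v_1^{k_1-1} v_2^{k_2-1}/((k_1-1)!(k_2-1)!)) q^{u_1 v_1 + u_2 v_2}. -/
open Finset PowerSeries

/-- The `q`-series `g^{(d)}_k(q) = Σ_{u,v ≥ 1} (u^d/d!)(v^{k-1}/(k-1)!) q^{uv}` as a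
formal power series: the coefficient of `q^n` is the (finite) sum over divisors. -/
noncomputable def gb (d k : ℕ) : PowerSeries ℚ :=
  PowerSeries.mk fun n =>
    ∑ u ∈ n.divisors,
      ((u : ℚ) ^ d / (Nat.factorial d : ℚ)) *
        (((n / u : ℕ) : ℚ) ^ (k - 1) / (Nat.factorial (k - 1) : ℚ))

/-- `g_k = g^{(0)}_k`. -/
noncomputable def g (k : ℕ) : PowerSeries ℚ := gb 0 k

/-- The depth-two series `g^{(d₁,d₂)}_{k₁,k₂}`. -/
noncomputable def gb2 (d1 d2 k1 k2 : ℕ) : PowerSeries ℚ :=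
  PowerSeries.mk fun n =>
    ∑ u1 ∈ Finset.range (n+1), ∑ u2 ∈ Finset.range (n+1),
    ∑ v1 ∈ Finset.range (n+1), ∑ v2 ∈ Finset.range (n+1),
      if 0 < u1 ∧ u1 < u2 ∧ 0 < v1 ∧ 0 < v2 ∧ u1 * v1 + u2 * v2 = n then
        ((u1 : ℚ) ^ d1 / (Nat.factorial d1 : ℚ)) *
        ((u2 : ℚ) ^ d2 / (Nat.factorial d2 : ℚ)) *
        ((v1 : ℚ) ^ (k1 - 1) / (Nat.factorial (k1 - 1) : ℚ)) *
        ((v2 : ℚ) ^ (k2 - 1) / (Nat.factorial (k2 - 1) : ℚ))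
      else 0

/-- `g_{k₁,k₂} = g^{(0,0)}_{k₁,k₂}`. -/
noncomputable def g2 (k1 k2 : ℕ) : PowerSeries ℚ := gb2 0 0 k1 k2

/-- The depth-three series `g^{(d₁,d₂,d₃)}_{k₁,k₂,k₃}`. -/
noncomputable def gb3 (d1 d2 d3 k1 k2 k3 : ℕ) : PowerSeries ℚ :=
  PowerSeries.mk fun n =>
    ∑ u1 ∈ Finset.range (n+1), ∑ u2 ∈ Finset.range (n+1), ∑ u3 ∈ Finset.range (n+1),
    ∑ v1 ∈ Finset.range (n+1), ∑ v2 ∈ Finset.range (n+1), ∑ v3 ∈ Finset.range (n+1),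
      if 0 < u1 ∧ u1 < u2 ∧ u2 < u3 ∧ 0 < v1 ∧ 0 < v2 ∧ 0 < v3 ∧
          u1 * v1 + u2 * v2 + u3 * v3 = n then
        ((u1 : ℚ) ^ d1 / (Nat.factorial d1 : ℚ)) *
        ((u2 : ℚ) ^ d2 / (Nat.factorial d2 : ℚ)) *
        ((u3 : ℚ) ^ d3 / (Nat.factorial d3 : ℚ)) *
        ((v1 : ℚ) ^ (k1 - 1) / (Nat.factorial (k1 - 1) : ℚ)) *
        ((v2 : ℚ) ^ (k2 - 1) / (Nat.factorial (k2 - 1) : ℚ)) *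
        ((v3 : ℚ) ^ (k3 - 1) / (Nat.factorial (k3 - 1) : ℚ))
      else 0

/-- `g_{k₁,k₂,k₃} = g^{(0,0,0)}_{k₁,k₂,k₃}`. -/
noncomputable def g3 (k1 k2 k3 : ℕ) : PowerSeries ℚ := gb3 0 0 0 k1 k2 k3

/-- The shuffle-regularized series `g^sh_{k₁,k₂}`. -/
noncomputable def gsh2 (k1 k2 : ℕ) : PowerSeries ℚ :=
  g2 k1 k2 + (if k1 = 1 then (1/2 : ℚ) else 0) • (gb 1 k2 - g k2)

/-- The shuffle-regularized series `g^sh_{k₁,k₂,k₃}`. -/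
noncomputable def gsh3 (k1 k2 k3 : ℕ) : PowerSeries ℚ :=
  g3 k1 k2 k3
    + (if k1 = 1 then (1/2 : ℚ) else 0) • (gb2 1 0 k2 k3 - g2 k2 k3)
    + (if k2 = 1 then (1/2 : ℚ) else 0) • (gb2 0 1 k1 k3 - gb2 1 0 k1 k3 - g2 k1 k3)
    + (if k1 * k2 = 1 then (1 : ℚ) else 0) •
        ((1/6 : ℚ) • gb 2 k3 - (1/4 : ℚ) • gb 1 k3 + (1/6 : ℚ) • g k3)

/-- The operator `d̂ = q·d/dq` on formal power series. -/
noncomputable def qd (f : PowerSeries ℚ) : PowerSeries ℚ :=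
  PowerSeries.mk fun n => (n : ℚ) * PowerSeries.coeff n f

/-!
Multiplying out `g_{k₁} g_{k₂}` gives `Σ a(v₁) b(v₂) q^{u₁v₁ + u₂v₂}` over all positive
`u₁, u₂, v₁, v₂`, where `a`, `b` are the weights `v ↦ v^{k-1}/(k-1)!`. Splitting according to
`u₁ < u₂`, `u₂ < u₁` and `u₁ = u₂` yields `g_{k₁,k₂} + g_{k₂,k₁}` plus a diagonal term. On the
diagonal the exponent is `u(v₁ + v₂)`, so that term is again a Lambert series `Σ c(v) q^{uv}`,
with the convolution `c(v) = Σ_{v₁+v₂=v} a(v₁) b(v₂)` as weight. For `(k₁, k₂) = (2, 3)`,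
`c(v) = Σ_{j<v} j (v-j)²/2 = (v⁴ - v²)/24 = v⁴/4! - (1/12) v²/2!`, giving `g₅ - g₃/12`.
-/

section LambertSeries

variable {R : Type*} [CommSemiring R]

-- `z = ((u₁, u₂), (v₁, v₂))`, the order in which `gb2` nests its sums.
def posSolutions (n : ℕ) : Finset ((ℕ × ℕ) × (ℕ × ℕ)) :=
  {z ∈ (range (n + 1) ×ˢ range (n + 1)) ×ˢ (range (n + 1) ×ˢ range (n + 1)) |
    0 < z.1.1 ∧ 0 < z.1.2 ∧ 0 < z.2.1 ∧ 0 < z.2.2 ∧ z.1.1 * z.2.1 + z.1.2 * z.2.2 = n}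

theorem mem_posSolutions {n : ℕ} {z : (ℕ × ℕ) × (ℕ × ℕ)} :
    z ∈ posSolutions n ↔
      0 < z.1.1 ∧ 0 < z.1.2 ∧ 0 < z.2.1 ∧ 0 < z.2.2 ∧ z.1.1 * z.2.1 + z.1.2 * z.2.2 = n := by
  obtain ⟨⟨u₁, u₂⟩, ⟨v₁, v₂⟩⟩ := z
  simp only [posSolutions, mem_filter, mem_product, mem_range, and_iff_right_iff_imp]
  rintro ⟨hu₁, hu₂, hv₁, hv₂, rfl⟩
  refine ⟨⟨?_, ?_⟩, ?_, ?_⟩ <;> nlinarith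

def lambertSeries : (ℕ → R) →ₗ[R] PowerSeries R where
  toFun a := mk fun n => ∑ x ∈ n.divisorsAntidiagonal, a x.2
  map_add' a b := by ext; simp [sum_add_distrib]
  map_smul' c a := by ext; simp [mul_sum]

def lambertSeries₂ (a b : ℕ → R) : PowerSeries R :=
  mk fun n => ∑ z ∈ posSolutions n with z.1.1 < z.1.2, a z.2.1 * b z.2.2

def posConvolution (a b : ℕ → R) (v : ℕ) : R :=
  ∑ y ∈ antidiagonal v with 0 < y.1 ∧ 0 < y.2, a y.1 * b y.2

theorem coeff_lambertSeries_mul (a b : ℕ → R) (n : ℕ) :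
    coeff n (lambertSeries a * lambertSeries b) = ∑ z ∈ posSolutions n, a z.2.1 * b z.2.2 := by
  simp only [coeff_mul, lambertSeries, LinearMap.coe_mk, AddHom.coe_mk, coeff_mk, sum_mul_sum,
    ← sum_product', sum_sigma']
  refine sum_nbij' (fun p => ((p.2.1.1, p.2.2.1), (p.2.1.2, p.2.2.2)))
    (fun z => ⟨(z.1.1 * z.2.1, z.1.2 * z.2.2), ((z.1.1, z.2.1), (z.1.2, z.2.2))⟩) ?_ ?_ ?_ ?_
    (fun _ _ => rfl)
  · rintro ⟨⟨m₁, m₂⟩, ⟨⟨u₁, v₁⟩, ⟨u₂, v₂⟩⟩⟩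
    simp only [mem_sigma, HasAntidiagonal.mem_antidiagonal, mem_product,
      Nat.mem_divisorsAntidiagonal, mem_posSolutions]
    rintro ⟨rfl, ⟨rfl, h₁⟩, ⟨rfl, h₂⟩⟩
    simp only [mul_ne_zero_iff, ← Nat.pos_iff_ne_zero] at h₁ h₂
    exact ⟨h₁.1, h₂.1, h₁.2, h₂.2, rfl⟩
  · rintro ⟨⟨u₁, u₂⟩, ⟨v₁, v₂⟩⟩
    simp only [mem_sigma, HasAntidiagonal.mem_antidiagonal, mem_product,
      Nat.mem_divisorsAntidiagonal, mem_posSolutions, true_and]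
    rintro ⟨hu₁, hu₂, hv₁, hv₂, rfl⟩
    exact ⟨rfl, by positivity, by positivity⟩
  · rintro ⟨⟨m₁, m₂⟩, ⟨⟨u₁, v₁⟩, ⟨u₂, v₂⟩⟩⟩
    simp only [mem_sigma, mem_product, Nat.mem_divisorsAntidiagonal]
    rintro ⟨-, ⟨rfl, -⟩, ⟨rfl, -⟩⟩
    rfl
  · intro z _
    rfl

theorem sum_posSolutions_swap (a b : ℕ → R) (n : ℕ) :
    ∑ z ∈ posSolutions n with z.1.2 < z.1.1, a z.2.1 * b z.2.2 =
      ∑ z ∈ posSolutions n with z.1.1 < z.1.2, b z.2.1 * a z.2.2 := by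
  refine sum_nbij' (fun z => (z.1.swap, z.2.swap)) (fun z => (z.1.swap, z.2.swap)) ?_ ?_
    (fun _ _ => rfl) (fun _ _ => rfl) (fun _ _ => mul_comm _ _) <;>
  · rintro ⟨⟨u₁, u₂⟩, ⟨v₁, v₂⟩⟩
    simp only [mem_filter, mem_posSolutions, Prod.fst_swap, Prod.snd_swap]
    omega

theorem sum_posSolutions_diag (a b : ℕ → R) (n : ℕ) :
    ∑ z ∈ posSolutions n with z.1.1 = z.1.2, a z.2.1 * b z.2.2 =
      ∑ x ∈ n.divisorsAntidiagonal, posConvolution a b x.2 := by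
  simp only [posConvolution, sum_sigma']
  refine (sum_nbij' (fun p : (_ : ℕ × ℕ) × (ℕ × ℕ) => ((p.1.1, p.1.1), p.2))
    (fun z => ⟨(z.1.1, z.2.1 + z.2.2), z.2⟩) ?_ ?_ ?_ ?_ (fun _ _ => rfl)).symm
  · rintro ⟨⟨u, v⟩, ⟨v₁, v₂⟩⟩
    simp only [mem_sigma, mem_filter, HasAntidiagonal.mem_antidiagonal,
      Nat.mem_divisorsAntidiagonal, mem_posSolutions, and_true]
    rintro ⟨⟨rfl, hn⟩, rfl, hv₁, hv₂⟩
    have hu := Nat.pos_of_ne_zero (left_ne_zero_of_mul hn)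
    exact ⟨hu, hu, hv₁, hv₂, (mul_add _ _ _).symm⟩
  · rintro ⟨⟨u₁, u₂⟩, ⟨v₁, v₂⟩⟩
    simp only [mem_sigma, mem_filter, HasAntidiagonal.mem_antidiagonal,
      Nat.mem_divisorsAntidiagonal, mem_posSolutions, true_and]
    rintro ⟨⟨hu₁, -, hv₁, hv₂, rfl⟩, rfl⟩
    exact ⟨⟨mul_add _ _ _, by positivity⟩, hv₁, hv₂⟩
  · rintro ⟨⟨u, v⟩, y⟩
    simp only [mem_sigma, mem_filter, HasAntidiagonal.mem_antidiagonal]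
    rintro ⟨-, rfl, -⟩
    rfl
  · rintro ⟨⟨u₁, u₂⟩, v⟩
    simp only [mem_filter]
    rintro ⟨-, rfl⟩
    rfl

theorem lambertSeries_mul (a b : ℕ → R) :
    lambertSeries a * lambertSeries b =
      lambertSeries₂ a b + lambertSeries₂ b a + lambertSeries (posConvolution a b) := by
  ext n
  have trichotomy : ∀ z ∈ posSolutions n, a z.2.1 * b z.2.2 =
      (if z.1.1 < z.1.2 then a z.2.1 * b z.2.2 else 0) +
        (if z.1.2 < z.1.1 then a z.2.1 * b z.2.2 else 0) +
        (if z.1.1 = z.1.2 then a z.2.1 * b z.2.2 else 0) := by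
    intro z _
    split_ifs <;> first | omega | simp
  rw [coeff_lambertSeries_mul, sum_congr rfl trichotomy]
  simp only [sum_add_distrib, ← sum_filter, sum_posSolutions_swap, sum_posSolutions_diag,
    map_add, lambertSeries₂, lambertSeries, LinearMap.coe_mk, AddHom.coe_mk, coeff_mk]

end LambertSeries

def gWeight (k v : ℕ) : ℚ := (v : ℚ) ^ (k - 1) / (k - 1).factorial

theorem g_eq_lambertSeries (k : ℕ) : g k = lambertSeries (gWeight k) := by
  ext n
  simp [g, gb, lambertSeries, gWeight,
    ← Nat.sum_divisorsAntidiagonal fun _ v => (v : ℚ) ^ (k - 1) / (k - 1).factorial]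

theorem g2_eq_lambertSeries₂ (k₁ k₂ : ℕ) :
    g2 k₁ k₂ = lambertSeries₂ (gWeight k₁) (gWeight k₂) := by
  ext n
  simp only [g2, gb2, lambertSeries₂, posSolutions, coeff_mk, filter_filter, sum_filter,
    sum_product]
  refine sum_congr rfl fun u₁ _ => sum_congr rfl fun u₂ _ => sum_congr rfl fun v₁ _ =>
    sum_congr rfl fun v₂ _ => ?_
  simp only [pow_zero, Nat.factorial_zero, Nat.cast_one, div_one, one_mul, gWeight]
  exact if_congr (by omega) rfl rfl

theorem sum_range_mul_sub_sq (v : ℕ) :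
    ∑ j ∈ range (v + 1), (j : ℚ) * (v - j) ^ 2 = ((v : ℚ) ^ 4 - v ^ 2) / 12 := by
  have h₁ : ∑ j ∈ range (v + 1), (j : ℚ) = (v + 1) * v / 2 := by
    rw [sum_range_induction _ (fun m => (m : ℚ) * (m - 1) / 2) (by simp) _
      fun m _ => by push_cast; ring]
    push_cast; ring
  have h₂ : ∑ j ∈ range (v + 1), (j : ℚ) ^ 2 = (v + 1) * v * (2 * v + 1) / 6 := by
    rw [sum_range_induction _ (fun m => (m : ℚ) * (m - 1) * (2 * m - 1) / 6) (by simp) _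
      fun m _ => by push_cast; ring]
    push_cast; ring
  have h₃ : ∑ j ∈ range (v + 1), (j : ℚ) ^ 3 = ((v + 1) * v / 2) ^ 2 := by
    rw [sum_range_induction _ (fun m => ((m : ℚ) * (m - 1) / 2) ^ 2) (by simp) _
      fun m _ => by push_cast; ring]
    push_cast; ring
  calc ∑ j ∈ range (v + 1), (j : ℚ) * (v - j) ^ 2
      = v ^ 2 * ∑ j ∈ range (v + 1), (j : ℚ) - 2 * v * ∑ j ∈ range (v + 1), (j : ℚ) ^ 2
          + ∑ j ∈ range (v + 1), (j : ℚ) ^ 3 := by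
        simp only [mul_sum, ← sum_sub_distrib, ← sum_add_distrib]
        exact sum_congr rfl fun j _ => by ring
    _ = ((v : ℚ) ^ 4 - v ^ 2) / 12 := by rw [h₁, h₂, h₃]; ring

theorem posConvolution_gWeight_two_three :
    posConvolution (gWeight 2) (gWeight 3) = gWeight 5 - (1 / 12 : ℚ) • gWeight 3 := by
  ext v
  have summand : ∀ j ∈ range (v + 1), gWeight 2 j * gWeight 3 (v - j) = j * (v - j) ^ 2 / 2 := by
    intro j hj
    simp [gWeight, Nat.cast_sub (Nat.lt_succ_iff.mp (mem_range.mp hj))]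
    ring
  rw [posConvolution, sum_filter_of_ne, Nat.sum_antidiagonal_eq_sum_range_succ_mk,
    sum_congr rfl summand, ← sum_div, sum_range_mul_sub_sq]
  · simp [gWeight, Nat.factorial]
    ring
  · rintro ⟨v₁, v₂⟩ - h
    simp only [gWeight] at h
    constructor <;> (apply Nat.pos_of_ne_zero; rintro rfl; simp at h)

/-- The quasi-shuffle (stuffle) product `g₂·g₃ = g_{2,3} + g_{3,2} + g₅ − (1/12) g₃`. -/
theorem stmt_2 : g 2 * g 3 = g2 2 3 + g2 3 2 + g 5 - (1/12 : ℚ) • g 3 := by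
  simp only [g_eq_lambertSeries, g2_eq_lambertSeries₂, lambertSeries_mul,
    posConvolution_gWeight_two_three, map_sub, map_smul, add_sub_assoc]
end

section
/- In ℚ[[q]] one has the identity g^{(1)}_1 · g^{(2)}_1 = g^{(1,2)}_{1,1} + g^{(2,1)}_{1,1} + 3·g^{(3)}_2 − 3·g^{(3)}_1. -/
/-! Multiplying out `g^{(d₁)}_{k₁} · g^{(d₂)}_{k₂}` gives a sum over pairs `(u₁, v₁), (u₂, v₂)`.
The terms with `u₁ < u₂` and with `u₁ > u₂` are the two depth-two series, which leaves the
diagonal `u₁ = u₂ = u`. For `k₁ = k₂ = 1` its terms are `u^{d₁+d₂}/(d₁! d₂!) · q^{u(v₁+v₂)}`, and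
a given `v = v₁ + v₂` arises in `v - 1` ways, so the diagonal is
`binom(d₁+d₂, d₂) (g^{(d₁+d₂)}_2 - g^{(d₁+d₂)}_1)`; the theorem is the case `d₁ = 1`, `d₂ = 2`. -/

open Finset PowerSeries

def gbWeight (d k u v : ℕ) : ℚ :=
  (u : ℚ) ^ d / (Nat.factorial d : ℚ) * ((v : ℚ) ^ (k - 1) / (Nat.factorial (k - 1) : ℚ))

lemma gbWeight_one (d u v : ℕ) : gbWeight d 1 u v = (u : ℚ) ^ d / d.factorial := by
  simp [gbWeight]

lemma gbWeight_two (d u v : ℕ) : gbWeight d 2 u v = (u : ℚ) ^ d / d.factorial * v := by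
  simp [gbWeight]

lemma coeff_gb (d k n : ℕ) : coeff n (gb d k) = ∑ u ∈ n.divisors, gbWeight d k u (n / u) := by
  rw [gb, coeff_mk]
  rfl

lemma coeff_gb_eq_sum_box (d k : ℕ) {m N : ℕ} (hm : m ≤ N) :
    coeff m (gb d k) = ∑ u ∈ range (N + 1), ∑ v ∈ range (N + 1),
      if 0 < u ∧ 0 < v ∧ u * v = m then gbWeight d k u v else 0 := by
  have hbox : {x ∈ range (N + 1) ×ˢ range (N + 1) | 0 < x.1 ∧ 0 < x.2 ∧ x.1 * x.2 = m} =
      m.divisorsAntidiagonal := by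
    ext ⟨u, v⟩
    simp only [mem_filter, mem_product, mem_range, Nat.mem_divisorsAntidiagonal]
    constructor
    · rintro ⟨-, hu, hv, rfl⟩
      exact ⟨rfl, by positivity⟩
    · rintro ⟨rfl, hm0⟩
      have hu : 0 < u := Nat.pos_of_ne_zero (left_ne_zero_of_mul hm0)
      have hv : 0 < v := Nat.pos_of_ne_zero (right_ne_zero_of_mul hm0)
      have := Nat.le_mul_of_pos_right u hv
      have := Nat.le_mul_of_pos_left v hu
      exact ⟨⟨by omega, by omega⟩, hu, hv, rfl⟩
  rw [coeff_gb, ← Nat.sum_divisorsAntidiagonal (fun u v => gbWeight d k u v), ← hbox,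
    sum_filter]
  exact sum_product' _ _ fun u v => if 0 < u ∧ 0 < v ∧ u * v = m then gbWeight d k u v else 0

lemma sum_antidiagonal_ite_mul_ite (n a b : ℕ) (P Q : Prop) [Decidable P] [Decidable Q]
    (x y : ℚ) :
    ∑ p ∈ antidiagonal n, (if P ∧ a = p.1 then x else 0) * (if Q ∧ b = p.2 then y else 0) =
      if P ∧ Q ∧ a + b = n then x * y else 0 := by
  by_cases hP : P
  · by_cases hQ : Q
    · have hsummand : ∀ p : ℕ × ℕ,
          (if P ∧ a = p.1 then x else 0) * (if Q ∧ b = p.2 then y else 0) =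
            if (a, b) = p then x * y else 0 := by
        rintro ⟨i, j⟩
        simp only [hP, hQ, true_and, ite_zero_mul_ite_zero, Prod.mk.injEq]
      rw [sum_congr rfl fun p _ => hsummand p, sum_ite_eq]
      simp only [HasAntidiagonal.mem_antidiagonal, hP, hQ, true_and]
    · simp [hQ]
  · simp [hP]

def boxSum (n : ℕ) (F : ℕ → ℕ → ℕ → ℕ → ℚ) : ℚ :=
  ∑ u1 ∈ range (n + 1), ∑ u2 ∈ range (n + 1), ∑ v1 ∈ range (n + 1), ∑ v2 ∈ range (n + 1),
    F u1 u2 v1 v2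

lemma boxSum_add (n : ℕ) (F G : ℕ → ℕ → ℕ → ℕ → ℚ) :
    boxSum n (fun u1 u2 v1 v2 => F u1 u2 v1 v2 + G u1 u2 v1 v2) = boxSum n F + boxSum n G := by
  simp only [boxSum, sum_add_distrib]

lemma boxSum_swap (n : ℕ) (F : ℕ → ℕ → ℕ → ℕ → ℚ) :
    boxSum n (fun u1 u2 v1 v2 => F u2 u1 v2 v1) = boxSum n F := by
  rw [boxSum, sum_comm]
  exact sum_congr rfl fun _ _ => sum_congr rfl fun _ _ => sum_comm

lemma sum_boxSum {ι : Type*} (s : Finset ι) (n : ℕ) (F : ι → ℕ → ℕ → ℕ → ℕ → ℚ) :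
    ∑ i ∈ s, boxSum n (F i) = boxSum n fun u1 u2 v1 v2 => ∑ i ∈ s, F i u1 u2 v1 v2 := by
  simp only [boxSum]
  rw [sum_comm]; refine sum_congr rfl fun _ _ => ?_
  rw [sum_comm]; refine sum_congr rfl fun _ _ => ?_
  rw [sum_comm]; refine sum_congr rfl fun _ _ => ?_
  exact sum_comm

lemma coeff_gb_mul_gb (d1 k1 d2 k2 n : ℕ) :
    coeff n (gb d1 k1 * gb d2 k2) = boxSum n fun u1 u2 v1 v2 =>
      if 0 < u1 ∧ 0 < u2 ∧ 0 < v1 ∧ 0 < v2 ∧ u1 * v1 + u2 * v2 = n then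
        gbWeight d1 k1 u1 v1 * gbWeight d2 k2 u2 v2 else 0 := by
  have hfactor : ∀ p ∈ antidiagonal n, coeff p.1 (gb d1 k1) * coeff p.2 (gb d2 k2) =
      boxSum n fun u1 u2 v1 v2 =>
        (if (0 < u1 ∧ 0 < v1) ∧ u1 * v1 = p.1 then gbWeight d1 k1 u1 v1 else 0) *
          (if (0 < u2 ∧ 0 < v2) ∧ u2 * v2 = p.2 then gbWeight d2 k2 u2 v2 else 0) := by
    intro p hp
    rw [HasAntidiagonal.mem_antidiagonal] at hp
    rw [coeff_gb_eq_sum_box d1 k1 (N := n) (by omega),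
      coeff_gb_eq_sum_box d2 k2 (N := n) (by omega)]
    simp only [boxSum, sum_mul_sum, and_assoc]
  rw [coeff_mul, sum_congr rfl hfactor, sum_boxSum]
  congr! 5 with u1 u2 v1 v2
  rw [sum_antidiagonal_ite_mul_ite]
  exact if_congr (by tauto) rfl rfl

lemma coeff_gb2 (d1 d2 k1 k2 n : ℕ) :
    coeff n (gb2 d1 d2 k1 k2) = boxSum n fun u1 u2 v1 v2 =>
      if 0 < u1 ∧ u1 < u2 ∧ 0 < v1 ∧ 0 < v2 ∧ u1 * v1 + u2 * v2 = n then
        gbWeight d1 k1 u1 v1 * gbWeight d2 k2 u2 v2 else 0 := by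
  rw [gb2, coeff_mk, boxSum]
  refine sum_congr rfl fun u1 _ => sum_congr rfl fun u2 _ =>
    sum_congr rfl fun v1 _ => sum_congr rfl fun v2 _ => if_congr Iff.rfl ?_ rfl
  rw [gbWeight, gbWeight]
  ring

lemma coeff_gb2_swap (d1 d2 k1 k2 n : ℕ) :
    coeff n (gb2 d2 d1 k2 k1) = boxSum n fun u1 u2 v1 v2 =>
      if 0 < u2 ∧ u2 < u1 ∧ 0 < v1 ∧ 0 < v2 ∧ u1 * v1 + u2 * v2 = n then
        gbWeight d1 k1 u1 v1 * gbWeight d2 k2 u2 v2 else 0 := by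
  rw [coeff_gb2, ← boxSum_swap]
  congr! 5 with u1 u2 v1 v2
  exact if_congr (by rw [add_comm]; tauto) (mul_comm _ _) rfl

noncomputable def gbDiag (d1 d2 k1 k2 : ℕ) : PowerSeries ℚ :=
  PowerSeries.mk fun n => ∑ u ∈ range (n + 1), ∑ v1 ∈ range (n + 1), ∑ v2 ∈ range (n + 1),
    if 0 < u ∧ 0 < v1 ∧ 0 < v2 ∧ u * (v1 + v2) = n then
      gbWeight d1 k1 u v1 * gbWeight d2 k2 u v2 else 0

lemma coeff_gbDiag (d1 d2 k1 k2 n : ℕ) :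
    coeff n (gbDiag d1 d2 k1 k2) = boxSum n fun u1 u2 v1 v2 =>
      if 0 < u1 ∧ u1 = u2 ∧ 0 < v1 ∧ 0 < v2 ∧ u1 * v1 + u2 * v2 = n then
        gbWeight d1 k1 u1 v1 * gbWeight d2 k2 u2 v2 else 0 := by
  rw [gbDiag, coeff_mk, boxSum]
  refine sum_congr rfl fun u hu => ?_
  symm
  rw [sum_eq_single_of_mem u hu]
  · refine sum_congr rfl fun v1 _ => sum_congr rfl fun v2 _ => if_congr ?_ rfl rfl
    rw [mul_add]
    tauto
  · intro u2 _ hne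
    simp [Ne.symm hne]

lemma ite_pos_eq_lt_add_gt_add_eq (a b : ℕ) (P : Prop) [Decidable P] (x : ℚ) :
    (if 0 < a ∧ 0 < b ∧ P then x else 0) =
      (if 0 < a ∧ a < b ∧ P then x else 0) + (if 0 < b ∧ b < a ∧ P then x else 0) +
        (if 0 < a ∧ a = b ∧ P then x else 0) := by
  by_cases hP : P <;> simp only [hP, and_true, and_false, if_false, add_zero]
  split_ifs <;> first | omega | ring1

theorem gb_mul_gb (d1 d2 k1 k2 : ℕ) :
    gb d1 k1 * gb d2 k2 = gb2 d1 d2 k1 k2 + gb2 d2 d1 k2 k1 + gbDiag d1 d2 k1 k2 := by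
  ext n
  rw [map_add, map_add, coeff_gb_mul_gb, coeff_gb2_swap d1 d2 k1 k2, coeff_gb2, coeff_gbDiag,
    ← boxSum_add, ← boxSum_add]
  congr! 5 with u1 u2 v1 v2
  apply ite_pos_eq_lt_add_gt_add_eq

lemma sum_range_sum_range_ite_add_eq {m N : ℕ} (hm0 : 0 < m) (hm : m ≤ N) (c : ℚ) :
    ∑ v1 ∈ range (N + 1), ∑ v2 ∈ range (N + 1),
      (if 0 < v1 ∧ 0 < v2 ∧ v1 + v2 = m then c else 0) = ((m : ℚ) - 1) * c := by
  have hinner : ∀ v1 ∈ range (N + 1),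
      (∑ v2 ∈ range (N + 1), if 0 < v1 ∧ 0 < v2 ∧ v1 + v2 = m then c else 0) =
        if v1 ∈ Ioo 0 m then c else 0 := by
    intro v1 _
    rw [sum_eq_single_of_mem (m - v1) (mem_range.2 (by omega))]
    · exact if_congr (by rw [mem_Ioo]; omega) rfl rfl
    · intro v2 _ hne
      exact if_neg (by omega)
  have hsub : Ioo 0 m ⊆ range (N + 1) := fun v hv => mem_range.2 (by rw [mem_Ioo] at hv; omega)
  rw [sum_congr rfl hinner, sum_ite_mem, inter_eq_right.2 hsub, sum_const, Nat.card_Ioo,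
    nsmul_eq_mul, Nat.sub_zero, Nat.cast_pred hm0]

lemma pow_div_factorial_mul_pow_div_factorial (x : ℚ) (i j : ℕ) :
    x ^ i / i.factorial * (x ^ j / j.factorial) =
      (i + j).choose j * (x ^ (i + j) / (i + j).factorial) := by
  have h := congrArg (Nat.cast (R := ℚ)) (Nat.add_choose_mul_factorial_mul_factorial i j)
  have hc : ((i + j).choose j : ℚ) ≠ 0 := mod_cast (Nat.choose_pos (Nat.le_add_left j i)).ne'
  push_cast at h
  rw [← h, pow_add]
  field_simp

theorem gbDiag_one_one (d1 d2 : ℕ) :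
    gbDiag d1 d2 1 1 = ((d1 + d2).choose d2 : ℚ) • (gb (d1 + d2) 2 - gb (d1 + d2) 1) := by
  ext n
  have hsub : n.divisors ⊆ range (n + 1) := fun u hu =>
    mem_range.2 (Nat.lt_succ_of_le (Nat.divisor_le hu))
  rw [gbDiag, coeff_mk, map_smul, map_sub, coeff_gb, coeff_gb, ← sum_sub_distrib, smul_eq_mul,
    mul_sum, ← sum_subset hsub]
  · refine sum_congr rfl fun u hu => ?_
    obtain ⟨⟨m, rfl⟩, hn⟩ := Nat.mem_divisors.1 hu
    have hu0 : 0 < u := Nat.pos_of_ne_zero (left_ne_zero_of_mul hn)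
    have hm0 : 0 < m := Nat.pos_of_ne_zero (right_ne_zero_of_mul hn)
    have hcond : ∀ v1 v2 : ℕ, (0 < u ∧ 0 < v1 ∧ 0 < v2 ∧ u * (v1 + v2) = u * m) ↔
        (0 < v1 ∧ 0 < v2 ∧ v1 + v2 = m) := by
      intro v1 v2
      rw [Nat.mul_left_cancel_iff hu0]
      tauto
    simp only [hcond, gbWeight_one, gbWeight_two, Nat.mul_div_cancel_left m hu0]
    rw [sum_range_sum_range_ite_add_eq hm0 (Nat.le_mul_of_pos_left m hu0),
      pow_div_factorial_mul_pow_div_factorial]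
    ring
  · intro u _ hu
    refine sum_eq_zero fun v1 _ => sum_eq_zero fun v2 _ => if_neg ?_
    rintro ⟨hu0, hv1, hv2, h⟩
    exact hu (Nat.mem_divisors.2 ⟨Dvd.intro _ h, by rw [← h]; positivity⟩)

/-- `g^{(1)}_1 · g^{(2)}_1 = g^{(1,2)}_{1,1} + g^{(2,1)}_{1,1} + 3 g^{(3)}_2 − 3 g^{(3)}_1`. -/
theorem stmt_3 :
    gb 1 1 * gb 2 1 =
      gb2 1 2 1 1 + gb2 2 1 1 1 + (3 : ℚ) • gb 3 2 - (3 : ℚ) • gb 3 1 := by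
  rw [gb_mul_gb, gbDiag_one_one, smul_sub, ← add_sub_assoc]
  norm_num [Nat.choose]
end

section
/- In ℚ[[q]] one has the partition relation in depth two: g^{(2,1)}_{1,1} = g_{2,3} + 3·g_{1,4}, where g^{(d_1,d_2)}_{k_1,k_2} is the double-indexed divisor series and g_{k_1,k_2} = g^{(0,0)}_{k_1,k_2}. -/
open Finset PowerSeries

/-! The coefficient of `q^n` on either side is a sum over the tuples `(u₁, u₂, v₁, v₂)` with
`0 < u₁ < u₂`, `v₁, v₂ > 0` and `u₁ v₁ + u₂ v₂ = n`. The map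
`(u₁, u₂, v₁, v₂) ↦ (v₂, v₁ + v₂, u₂ - u₁, u₁)` is an involution of this set (it is the
conjugation of the partition of `n` into the parts `u₂ > u₁` with multiplicities `v₂, v₁`),
and it turns the weight `u₁² u₂ / 2` of `g^{(2,1)}_{1,1}` into
`v₂² (v₁ + v₂) / 2 = v₁ v₂² / 2 + 3 · v₂³ / 6`, the weight of `g_{2,3} + 3 g_{1,4}`. -/

def depthTwoTuples (n : ℕ) : Finset (ℕ × ℕ × ℕ × ℕ) :=
  (range (n + 1) ×ˢ range (n + 1) ×ˢ range (n + 1) ×ˢ range (n + 1)).filter fun p =>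
    0 < p.1 ∧ p.1 < p.2.1 ∧ 0 < p.2.2.1 ∧ 0 < p.2.2.2 ∧ p.1 * p.2.2.1 + p.2.1 * p.2.2.2 = n

lemma mem_depthTwoTuples {n u₁ u₂ v₁ v₂ : ℕ} :
    (u₁, u₂, v₁, v₂) ∈ depthTwoTuples n ↔
      0 < u₁ ∧ u₁ < u₂ ∧ 0 < v₁ ∧ 0 < v₂ ∧ u₁ * v₁ + u₂ * v₂ = n := by
  simp only [depthTwoTuples, mem_filter, mem_product, mem_range, and_iff_right_iff_imp]
  rintro ⟨hu₁, hu₁₂, hv₁, hv₂, rfl⟩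
  have := Nat.le_mul_of_pos_right u₁ hv₁
  have := Nat.le_mul_of_pos_right u₂ hv₂
  have := Nat.le_mul_of_pos_left v₁ hu₁
  have := Nat.le_mul_of_pos_left v₂ (hu₁.trans hu₁₂)
  omega

lemma coeff_gb2_s5 (d₁ d₂ k₁ k₂ n : ℕ) :
    coeff n (gb2 d₁ d₂ k₁ k₂) = ∑ p ∈ depthTwoTuples n,
      (p.1 : ℚ) ^ d₁ / d₁.factorial * ((p.2.1 : ℚ) ^ d₂ / d₂.factorial) *
        ((p.2.2.1 : ℚ) ^ (k₁ - 1) / (k₁ - 1).factorial) *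
        ((p.2.2.2 : ℚ) ^ (k₂ - 1) / (k₂ - 1).factorial) := by
  simp only [gb2, coeff_mk, depthTwoTuples, sum_filter, sum_product]

def conjugateTuple : ℕ × ℕ × ℕ × ℕ → ℕ × ℕ × ℕ × ℕ
  | (u₁, u₂, v₁, v₂) => (v₂, v₁ + v₂, u₂ - u₁, u₁)

lemma conjugateTuple_mem {n : ℕ} {p : ℕ × ℕ × ℕ × ℕ} (hp : p ∈ depthTwoTuples n) :
    conjugateTuple p ∈ depthTwoTuples n := by
  obtain ⟨u₁, u₂, v₁, v₂⟩ := p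
  obtain ⟨hu₁, hu₁₂, hv₁, hv₂, hn⟩ := mem_depthTwoTuples.1 hp
  rw [conjugateTuple]
  refine mem_depthTwoTuples.2 ⟨hv₂, by omega, by omega, hu₁, ?_⟩
  zify [hu₁₂.le] at hn ⊢
  linear_combination hn

lemma conjugateTuple_conjugateTuple {n : ℕ} {p : ℕ × ℕ × ℕ × ℕ} (hp : p ∈ depthTwoTuples n) :
    conjugateTuple (conjugateTuple p) = p := by
  obtain ⟨u₁, u₂, v₁, v₂⟩ := p
  have hu₁₂ : u₁ < u₂ := (mem_depthTwoTuples.1 hp).2.1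
  simp only [conjugateTuple, Prod.mk.injEq, true_and, and_true]
  omega

lemma sum_depthTwoTuples_comp_conjugateTuple {M : Type*} [AddCommMonoid M] (n : ℕ)
    (f : ℕ × ℕ × ℕ × ℕ → M) :
    ∑ p ∈ depthTwoTuples n, f (conjugateTuple p) = ∑ p ∈ depthTwoTuples n, f p :=
  sum_nbij' conjugateTuple conjugateTuple (fun _ => conjugateTuple_mem)
    (fun _ => conjugateTuple_mem) (fun _ => conjugateTuple_conjugateTuple)
    (fun _ => conjugateTuple_conjugateTuple) fun _ _ => rfl

/-- Partition relation in depth two: `g^{(2,1)}_{1,1} = g_{2,3} + 3 g_{1,4}`. -/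
theorem stmt_5 : gb2 2 1 1 1 = g2 2 3 + (3 : ℚ) • g2 1 4 := by
  ext n
  simp only [g2, map_add, map_smul, coeff_gb2_s5, smul_eq_mul, mul_sum, ← sum_add_distrib]
  rw [← sum_depthTwoTuples_comp_conjugateTuple]
  refine sum_congr rfl fun p _ => ?_
  obtain ⟨u₁, u₂, v₁, v₂⟩ := p
  simp only [conjugateTuple, Nat.cast_add, Nat.factorial, Nat.reduceSub]
  ring
end

section
/- In ℚ[[q]] one has the relation 0 = g_5 − 2·g_{2,3} − 6·g_{1,4} − 3·g^{(1)}_4 + 3·g_4 − (1/12)·g_3, arising from comparing the two product expressions (stuffle and shuffle) for g_2 · g_3. -/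
open Finset PowerSeries

/-!
Let `𝒫(n)` be the set of pairs `((u₁, v₁), (u₂, v₂))` of pairs of positive integers with
`u₁ v₁ + u₂ v₂ = n`, so that `Σ_{𝒫(n)} v₁ v₂²` is the `n`-th coefficient of `2 g₂ g₃`.
Splitting `𝒫(n)` according to `u₁ < u₂`, `u₁ > u₂`, `u₁ = u₂` expresses this sum through
depth-two sums and a diagonal term (the stuffle product). Exchanging `u` and `v` first, and then
applying to the part `u₁ < u₂` the partition-conjugation involution
`((u₁, v₁), (u₂, v₂)) ↦ ((v₂, u₂ - u₁), (v₁ + v₂, u₁))`, expresses it differently (the shuffle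
product). On the diagonal `u₁ = u₂ = u`, `v₁ + v₂ = v` the two contribute `(v⁴ - v²)/12` and
`(v - 1) u³`. Comparing the two expressions gives the relation.
-/

section PowerSums

variable {R : Type*} [CommRing R]

theorem sum_range_cast_mul_two (v : ℕ) : (∑ i ∈ range v, (i : R)) * 2 = v * (v - 1) := by
  induction v with
  | zero => simp
  | succ v ih => rw [sum_range_succ, add_mul, ih]; push_cast; ring

theorem sum_range_cast_sq_mul_six (v : ℕ) :
    (∑ i ∈ range v, (i : R) ^ 2) * 6 = v * (v - 1) * (2 * v - 1) := by
  induction v with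
  | zero => simp
  | succ v ih => rw [sum_range_succ, add_mul, ih]; push_cast; ring

theorem sum_range_cast_cube_mul_four (v : ℕ) :
    (∑ i ∈ range v, (i : R) ^ 3) * 4 = v ^ 2 * (v - 1) ^ 2 := by
  induction v with
  | zero => simp
  | succ v ih => rw [sum_range_succ, add_mul, ih]; push_cast; ring

theorem sum_Ico_mul_sub_sq_mul_twelve (v : ℕ) :
    (∑ j ∈ Ico 1 v, (j : R) * ((v - j : ℕ) : R) ^ 2) * 12 = (v : R) ^ 4 - (v : R) ^ 2 := by
  have hrange : ∑ j ∈ Ico 1 v, (j : R) * ((v - j : ℕ) : R) ^ 2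
      = ∑ j ∈ range v, ((v : R) ^ 2 * j - 2 * v * j ^ 2 + j ^ 3) := by
    rcases Nat.eq_zero_or_pos v with rfl | hv
    · simp
    rw [sum_range_eq_add_Ico _ hv]
    simp only [Nat.cast_zero, mul_zero, ne_eq, OfNat.ofNat_ne_zero, not_false_eq_true, zero_pow,
      sub_zero, add_zero, zero_add]
    refine sum_congr rfl fun j hj => ?_
    rw [Nat.cast_sub (mem_Ico.mp hj).2.le]
    ring
  rw [hrange, sum_add_distrib, sum_sub_distrib, ← mul_sum, ← mul_sum]
  linear_combination (6 * (v : R) ^ 2) * sum_range_cast_mul_two (R := R) v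
    - (4 * (v : R)) * sum_range_cast_sq_mul_six (R := R) v
    + 3 * sum_range_cast_cube_mul_four (R := R) v

end PowerSums

theorem Finset.sum_comp_of_involution {α M : Type*} [AddCommMonoid M] {s : Finset α}
    (σ : α → α) (hσ : ∀ x ∈ s, σ x ∈ s) (hσσ : ∀ x ∈ s, σ (σ x) = x) (f : α → M) :
    ∑ x ∈ s, f (σ x) = ∑ x ∈ s, f x :=
  sum_nbij' σ σ hσ hσ hσσ hσσ fun _ _ => rfl

def divisorPairs (n : ℕ) : Finset ((ℕ × ℕ) × (ℕ × ℕ)) :=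
  ((range (n + 1) ×ˢ range (n + 1)) ×ˢ (range (n + 1) ×ˢ range (n + 1))).filter fun x =>
    0 < x.1.1 ∧ 0 < x.1.2 ∧ 0 < x.2.1 ∧ 0 < x.2.2 ∧ x.1.1 * x.1.2 + x.2.1 * x.2.2 = n

@[simp]
theorem mem_divisorPairs {n u₁ v₁ u₂ v₂ : ℕ} :
    ((u₁, v₁), (u₂, v₂)) ∈ divisorPairs n ↔
      0 < u₁ ∧ 0 < v₁ ∧ 0 < u₂ ∧ 0 < v₂ ∧ u₁ * v₁ + u₂ * v₂ = n := by
  simp only [divisorPairs, mem_filter, mem_product, mem_range, and_iff_right_iff_imp]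
  rintro ⟨hu₁, hv₁, hu₂, hv₂, rfl⟩
  have := Nat.le_mul_of_pos_right u₁ hv₁
  have := Nat.le_mul_of_pos_left v₁ hu₁
  have := Nat.le_mul_of_pos_right u₂ hv₂
  have := Nat.le_mul_of_pos_left v₂ hu₂
  omega

def ascPairs (n : ℕ) : Finset ((ℕ × ℕ) × (ℕ × ℕ)) :=
  (divisorPairs n).filter fun x => x.1.1 < x.2.1

section DivisorPairs

variable {M : Type*} [AddCommMonoid M] (n : ℕ) (f : (ℕ × ℕ) × (ℕ × ℕ) → M)

theorem sum_divisorPairs_swap : ∑ x ∈ divisorPairs n, f x.swap = ∑ x ∈ divisorPairs n, f x :=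
  sum_comp_of_involution _
    (by rintro ⟨⟨u₁, v₁⟩, u₂, v₂⟩; simp only [mem_divisorPairs, Prod.swap_prod_mk]; omega)
    (fun _ _ => rfl) f

theorem sum_divisorPairs_transpose :
    ∑ x ∈ divisorPairs n, f (x.1.swap, x.2.swap) = ∑ x ∈ divisorPairs n, f x :=
  sum_comp_of_involution _
    (by rintro ⟨⟨u₁, v₁⟩, u₂, v₂⟩; simp only [mem_divisorPairs, Prod.swap_prod_mk, mul_comm]; omega)
    (fun _ _ => rfl) f

theorem sum_divisorPairs_eq_sum_ascPairs_add :
    ∑ x ∈ divisorPairs n, f x = ∑ x ∈ ascPairs n, (f x + f x.swap)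
      + ∑ x ∈ (divisorPairs n).filter (fun x => x.1.1 = x.2.1), f x := by
  calc ∑ x ∈ divisorPairs n, f x
      = ∑ x ∈ divisorPairs n, ((if x.1.1 < x.2.1 then f x else 0)
          + (if x.2.1 < x.1.1 then f x else 0) + (if x.1.1 = x.2.1 then f x else 0)) :=
        sum_congr rfl fun x _ => by split_ifs <;> first | omega | simp
    _ = _ := by
      rw [sum_add_distrib, sum_add_distrib,
        ← sum_divisorPairs_swap n fun x => if x.2.1 < x.1.1 then f x else 0]
      simp only [Prod.fst_swap, Prod.snd_swap, ← sum_filter, ascPairs, sum_add_distrib]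

theorem sum_ascPairs_conj :
    ∑ x ∈ ascPairs n, f ((x.2.2, x.2.1 - x.1.1), (x.1.2 + x.2.2, x.1.1))
      = ∑ x ∈ ascPairs n, f x := by
  refine sum_comp_of_involution _ ?_ ?_ f
  · rintro ⟨⟨u₁, v₁⟩, u₂, v₂⟩
    simp only [ascPairs, mem_filter, mem_divisorPairs]
    rintro ⟨⟨hu₁, hv₁, hu₂, hv₂, rfl⟩, hlt⟩
    obtain ⟨t, rfl⟩ := Nat.exists_eq_add_of_lt hlt
    refine ⟨⟨hv₂, by omega, by omega, hu₁, ?_⟩, by omega⟩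
    rw [show u₁ + t + 1 - u₁ = t + 1 by omega]
    ring
  · rintro ⟨⟨u₁, v₁⟩, u₂, v₂⟩
    simp only [ascPairs, mem_filter, Prod.mk.injEq, true_and, and_true]
    rintro ⟨-, hlt⟩
    omega

theorem sum_divisorPairs_filter_fst_eq :
    ∑ x ∈ (divisorPairs n).filter (fun x => x.1.1 = x.2.1), f x
      = ∑ d ∈ n.divisorsAntidiagonal, ∑ j ∈ Ico 1 d.2, f ((d.1, j), (d.1, d.2 - j)) := by
  rw [sum_sigma']
  refine sum_nbij' (fun x => ⟨(x.1.1, x.1.2 + x.2.2), x.1.2⟩)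
    (fun y => ((y.1.1, y.2), (y.1.1, y.1.2 - y.2))) ?_ ?_ ?_ ?_ ?_
  · rintro ⟨⟨u₁, v₁⟩, u₂, v₂⟩
    simp only [mem_filter, mem_divisorPairs, mem_sigma, Nat.mem_divisorsAntidiagonal, mem_Ico]
    rintro ⟨⟨hu₁, hv₁, hu₂, hv₂, rfl⟩, rfl⟩
    refine ⟨⟨by ring, by positivity⟩, hv₁, by omega⟩
  · rintro ⟨⟨u, v⟩, j⟩
    simp only [mem_filter, mem_divisorPairs, mem_sigma, Nat.mem_divisorsAntidiagonal, mem_Ico]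
    rintro ⟨⟨rfl, hn⟩, hj, hjv⟩
    have hu : 0 < u := Nat.pos_of_ne_zero (left_ne_zero_of_mul hn)
    refine ⟨⟨hu, hj, hu, by omega, ?_⟩, trivial⟩
    rw [← mul_add, Nat.add_sub_cancel' hjv.le]
  · rintro ⟨⟨u₁, v₁⟩, u₂, v₂⟩
    simp only [mem_filter, Prod.mk.injEq, true_and]
    rintro ⟨-, rfl⟩
    omega
  · rintro ⟨⟨u, v⟩, j⟩
    simp only [mem_sigma, Nat.mem_divisorsAntidiagonal, mem_Ico, Sigma.mk.injEq]
    rintro ⟨-, -, hjv⟩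
    simp only [Prod.mk.injEq, heq_eq_eq, true_and, and_true]
    omega
  · rintro ⟨⟨u₁, v₁⟩, u₂, v₂⟩
    simp only [mem_filter, mem_divisorPairs]
    rintro ⟨⟨-, -, -, -, -⟩, rfl⟩
    simp

end DivisorPairs

theorem sum_divisorsAntidiagonal_pow_four_sub_sq {R : Type*} [CommRing R] (n : ℕ) :
    ∑ d ∈ n.divisorsAntidiagonal, ((d.2 : R) ^ 4 - (d.2 : R) ^ 2)
      = 24 * ∑ x ∈ ascPairs n, ((x.1.2 : R) * (x.2.2 : R) ^ 2 + (x.2.2 : R) ^ 3)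
        + 12 * ∑ d ∈ n.divisorsAntidiagonal, ((d.1 : R) - 1) * (d.2 : R) ^ 3 := by
  have stuffle : ∑ x ∈ divisorPairs n, (x.1.2 : R) * (x.2.2 : R) ^ 2
      = ∑ x ∈ ascPairs n, ((x.1.2 : R) * (x.2.2 : R) ^ 2 + (x.2.2 : R) * (x.1.2 : R) ^ 2)
        + ∑ d ∈ n.divisorsAntidiagonal, ∑ j ∈ Ico 1 d.2, (j : R) * ((d.2 - j : ℕ) : R) ^ 2 := by
    rw [sum_divisorPairs_eq_sum_ascPairs_add, sum_divisorPairs_filter_fst_eq]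
    rfl
  have shuffle : ∑ x ∈ divisorPairs n, (x.1.2 : R) * (x.2.2 : R) ^ 2
      = ∑ x ∈ ascPairs n, ((x.2.2 : R) * ((x.1.2 + x.2.2 : ℕ) : R) ^ 2
          + ((x.1.2 + x.2.2 : ℕ) : R) * (x.2.2 : R) ^ 2)
        + ∑ d ∈ n.divisorsAntidiagonal, ∑ _j ∈ Ico 1 d.2, (d.1 : R) * (d.1 : R) ^ 2 := by
    rw [← sum_divisorPairs_transpose, sum_divisorPairs_eq_sum_ascPairs_add,
      sum_divisorPairs_filter_fst_eq]
    simp only [Prod.fst_swap, Prod.snd_swap]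
    rw [← sum_ascPairs_conj n fun x =>
      (x.1.1 : R) * (x.2.1 : R) ^ 2 + (x.2.1 : R) * (x.1.1 : R) ^ 2]
  have hasc : ∑ x ∈ ascPairs n, ((x.2.2 : R) * ((x.1.2 + x.2.2 : ℕ) : R) ^ 2
        + ((x.1.2 + x.2.2 : ℕ) : R) * (x.2.2 : R) ^ 2)
      = ∑ x ∈ ascPairs n, ((x.1.2 : R) * (x.2.2 : R) ^ 2 + (x.2.2 : R) * (x.1.2 : R) ^ 2)
        + 2 * ∑ x ∈ ascPairs n, ((x.1.2 : R) * (x.2.2 : R) ^ 2 + (x.2.2 : R) ^ 3) := by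
    rw [mul_sum, ← sum_add_distrib]
    exact sum_congr rfl fun x _ => by push_cast; ring
  have hdiag : (∑ d ∈ n.divisorsAntidiagonal, ∑ j ∈ Ico 1 d.2, (j : R) * ((d.2 - j : ℕ) : R) ^ 2)
      * 12 = ∑ d ∈ n.divisorsAntidiagonal, ((d.2 : R) ^ 4 - (d.2 : R) ^ 2) := by
    rw [sum_mul]
    exact sum_congr rfl fun d _ => sum_Ico_mul_sub_sq_mul_twelve d.2
  have hcube : ∑ d ∈ n.divisorsAntidiagonal, ∑ _j ∈ Ico 1 d.2, (d.1 : R) * (d.1 : R) ^ 2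
      = ∑ d ∈ n.divisorsAntidiagonal, ((d.1 : R) - 1) * (d.2 : R) ^ 3 := by
    conv_rhs => rw [← Nat.map_swap_divisorsAntidiagonal, sum_map]
    refine sum_congr rfl fun d hd => ?_
    have : 1 ≤ d.2 := Nat.pos_of_ne_zero (Nat.right_ne_zero_of_mem_divisorsAntidiagonal hd)
    simp only [sum_const, Nat.card_Ico, nsmul_eq_mul, Nat.cast_sub this, Nat.cast_one,
      Function.Embedding.coeFn_mk, Equiv.prodComm_apply, Prod.fst_swap, Prod.snd_swap]
    ring
  linear_combination 12 * (shuffle - stuffle + hasc + hcube) - hdiag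

open Nat in
theorem coeff_gb_s9 (d k n : ℕ) :
    coeff n (gb d k)
      = (∑ x ∈ n.divisorsAntidiagonal, (x.1 : ℚ) ^ d * (x.2 : ℚ) ^ (k - 1)) / (d ! * (k - 1)!) := by
  rw [gb, coeff_mk, ← Nat.sum_divisorsAntidiagonal fun u v =>
    (u : ℚ) ^ d / d ! * ((v : ℚ) ^ (k - 1) / (k - 1)!), sum_div]
  exact sum_congr rfl fun _ _ => by ring

open Nat in
theorem coeff_gb2_s9 (d₁ d₂ k₁ k₂ n : ℕ) :
    coeff n (gb2 d₁ d₂ k₁ k₂)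
      = (∑ x ∈ ascPairs n, (x.1.1 : ℚ) ^ d₁ * (x.2.1 : ℚ) ^ d₂ * (x.1.2 : ℚ) ^ (k₁ - 1)
          * (x.2.2 : ℚ) ^ (k₂ - 1)) / (d₁ ! * d₂ ! * (k₁ - 1)! * (k₂ - 1)!) := by
  rw [gb2, coeff_mk, ascPairs, divisorPairs, filter_filter, sum_filter, sum_div]
  simp only [sum_product]
  refine sum_congr rfl fun u₁ _ => ?_
  rw [sum_comm]
  refine sum_congr rfl fun u₂ _ => sum_congr rfl fun v₁ _ => sum_congr rfl fun v₂ _ => ?_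
  split_ifs <;> first | omega | simp | ring

/-- The double-shuffle relation
`0 = g₅ − 2 g_{2,3} − 6 g_{1,4} − 3 g^{(1)}₄ + 3 g₄ − (1/12) g₃`. -/
theorem stmt_9 :
    (0 : PowerSeries ℚ) =
      g 5 - (2 : ℚ) • g2 2 3 - (6 : ℚ) • g2 1 4 - (3 : ℚ) • gb 1 4
        + (3 : ℚ) • g 4 - (1/12 : ℚ) • g 3 := by
  ext n
  have key := sum_divisorsAntidiagonal_pow_four_sub_sq (R := ℚ) n
  simp only [sum_sub_distrib, sum_add_distrib, sub_mul, one_mul] at key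
  simp only [g, g2, map_sub, map_add, map_smul, smul_eq_mul, map_zero, coeff_gb_s9, coeff_gb2_s9]
  norm_num [Nat.factorial]
  linear_combination -key / 24
end

section
/- For every integer k ≥ 2, the limit as q → 1⁻ (q real, 0 < q < 1) of (1−q)^k · g_k(q) equals ζ(k), where g_k(q) = Σ_{u,v ≥ 1} (v^{k-1}/(k-1)!)·q^{uv} (the series converges absolutely for 0 < q < 1). -/
/-- The single zeta value `ζ(k) = Σ_{m ≥ 1} 1/m^k` as a real series. -/
noncomputable def zeta1 (k : ℕ) : ℝ :=
  ∑' m : ℕ, if 0 < m then 1 / (m : ℝ) ^ k else 0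

/-- `g_k(q) = Σ_{u,v ≥ 1} (v^{k−1}/(k−1)!) q^{uv}` as a function of real `q`. -/
noncomputable def gR (k : ℕ) (q : ℝ) : ℝ :=
  ∑' p : ℕ × ℕ,
    if 0 < p.1 ∧ 0 < p.2 then
      (p.2 : ℝ) ^ (k - 1) / (Nat.factorial (k - 1) : ℝ) * q ^ (p.1 * p.2)
    else 0

/-!
Write `powGeom K x = Σ_v v^K/K! x^v`. Summing over `u` first, `g_{K+1}(q) = Σ_{u ≥ 1} powGeom K (q^u)`.
Squeezing `v^K/K!` between the binomial coefficients `C(v, K)` and `C(v + K - 1, K)` gives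
`x^K/(1-x)^(K+1) ≤ powGeom K x ≤ x/(1-x)^(K+1)`. Since `1 - q^u = (1 - q)(1 + q + ⋯ + q^(u-1))`,
the `u`-th term of `(1-q)^(K+1) g_{K+1}(q)` is therefore squeezed between two continuous functions of
`q` equal to `1/u^(K+1)` at `q = 1`, and it is at most `(K+1)^(K+1)/u^(K+1)` uniformly in `q`.
Dominated convergence for series (Tannery's theorem) concludes.
-/

open Filter Topology Finset
open scoped Nat

noncomputable def powGeom (K : ℕ) (x : ℝ) : ℝ :=
  ∑' v : ℕ, (v : ℝ) ^ K / K ! * x ^ v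

section powGeom

variable {K : ℕ} {x : ℝ}

lemma summable_powGeom (K : ℕ) (h0 : 0 ≤ x) (h1 : x < 1) :
    Summable fun v : ℕ => (v : ℝ) ^ K / K ! * x ^ v := by
  have hx : ‖x‖ < 1 := by rwa [Real.norm_of_nonneg h0]
  simpa only [div_mul_eq_mul_div] using
    (summable_pow_mul_geometric_of_norm_lt_one K hx).div_const (K ! : ℝ)

lemma div_one_sub_pow_le_powGeom (h0 : 0 ≤ x) (h1 : x < 1) :
    x ^ K / (1 - x) ^ (K + 1) ≤ powGeom K x := by
  have hx : ‖x‖ < 1 := by rwa [Real.norm_of_nonneg h0]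
  calc x ^ K / (1 - x) ^ (K + 1) = ∑' w : ℕ, ((w + K).choose K : ℝ) * x ^ w * x ^ K := by
        rw [tsum_mul_right, tsum_choose_mul_geometric_of_norm_lt_one K hx]; ring
    _ ≤ powGeom K x := by
      refine Summable.tsum_le_tsum_of_inj (· + K) (add_left_injective K)
        (fun _ _ => by positivity) (fun w => ?_)
        ((summable_choose_mul_geometric_of_norm_lt_one K hx).mul_right _)
        (summable_powGeom K h0 h1)
      rw [mul_assoc, ← pow_add, add_comm w K]
      gcongr
      exact mod_cast Nat.choose_le_pow_div K (K + w)

lemma powGeom_le_div_one_sub_pow (hK : K ≠ 0) (h0 : 0 ≤ x) (h1 : x < 1) :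
    powGeom K x ≤ x / (1 - x) ^ (K + 1) := by
  have hx : ‖x‖ < 1 := by rwa [Real.norm_of_nonneg h0]
  calc powGeom K x = ∑' w : ℕ, ((w + 1 : ℕ) : ℝ) ^ K / K ! * x ^ (w + 1) := by
        rw [powGeom, (summable_powGeom K h0 h1).tsum_eq_zero_add]; simp [hK]
    _ ≤ ∑' w : ℕ, ((w + K).choose K : ℝ) * x ^ w * x := by
      refine Summable.tsum_le_tsum (fun w => ?_)
        ((summable_powGeom K h0 h1).comp_injective (add_left_injective 1))
        ((summable_choose_mul_geometric_of_norm_lt_one K hx).mul_right _)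
      rw [pow_succ, ← mul_assoc]
      gcongr
      simpa [add_right_comm w K 1] using Nat.pow_le_choose (α := ℝ) K (w + K)
    _ = x / (1 - x) ^ (K + 1) := by
      rw [tsum_mul_right, tsum_choose_mul_geometric_of_norm_lt_one K hx]; ring

end powGeom

section geomSum

variable {q : ℝ}

lemma succ_mul_pow_le_geom_sum (hq0 : 0 ≤ q) (hq1 : q ≤ 1) {m u : ℕ} (hmu : m < u) :
    (m + 1) * q ^ m ≤ ∑ j ∈ range u, q ^ j :=
  calc (m + 1) * q ^ m = ∑ _j ∈ range (m + 1), q ^ m := by simp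
    _ ≤ ∑ j ∈ range (m + 1), q ^ j :=
      sum_le_sum fun j hj => pow_le_pow_of_le_one hq0 hq1 (Nat.lt_succ_iff.mp (mem_range.mp hj))
    _ ≤ ∑ j ∈ range u, q ^ j :=
      sum_le_sum_of_subset_of_nonneg (range_subset_range.mpr hmu) fun j _ _ => by positivity

lemma pow_mul_pow_le_geom_sum_pow (hq0 : 0 ≤ q) (hq1 : q ≤ 1) {k : ℕ} (hk : k ≠ 0) (u : ℕ) :
    (u : ℝ) ^ k * q ^ u ≤ (k : ℝ) ^ k * (∑ j ∈ range u, q ^ j) ^ k := by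
  rcases Nat.eq_zero_or_pos u with rfl | hu
  · simp [hk]
  have hdiv_le := Nat.div_le_self (u - 1) k
  have hlt_succ := Nat.lt_mul_div_succ (u - 1) (Nat.pos_of_ne_zero hk)
  have hdiv_mul := Nat.div_mul_le_self (u - 1) k
  -- compare with the first `(u - 1) / k + 1` terms of the geometric sum
  generalize (u - 1) / k = m at hdiv_le hlt_succ hdiv_mul
  calc (u : ℝ) ^ k * q ^ u ≤ ((k : ℝ) * (m + 1)) ^ k * q ^ (m * k) := by
        gcongr ?_ ^ k * ?_
        · exact_mod_cast (show u ≤ k * (m + 1) by omega)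
        · exact pow_le_pow_of_le_one hq0 hq1 (by omega)
    _ = (k : ℝ) ^ k * ((m + 1) * q ^ m) ^ k := by rw [mul_pow, mul_pow, pow_mul]; ring
    _ ≤ (k : ℝ) ^ k * (∑ j ∈ range u, q ^ j) ^ k := by
      gcongr
      exact succ_mul_pow_le_geom_sum hq0 hq1 (by omega)

lemma tendsto_pow_div_geom_sum_pow (m : ℕ) {u : ℕ} (hu : 0 < u) (k : ℕ) :
    Tendsto (fun q : ℝ => q ^ m / (∑ j ∈ range u, q ^ j) ^ k) (𝓝 1) (𝓝 (1 / (u : ℝ) ^ k)) := by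
  have hcont : ContinuousAt (fun q : ℝ => q ^ m / (∑ j ∈ range u, q ^ j) ^ k) 1 :=
    (continuous_pow m).continuousAt.div (by fun_prop) (by simp [hu.ne'])
  simpa using hcont.tendsto

end geomSum

section lambert

variable {K u : ℕ} {q : ℝ}

lemma one_sub_pow_mul_div_one_sub_pow (a : ℝ) (hq0 : 0 < q) (hq1 : q < 1) (hu : 0 < u) (k : ℕ) :
    (1 - q) ^ k * (a / (1 - q ^ u) ^ k) = a / (∑ j ∈ range u, q ^ j) ^ k := by
  have := geom_sum_pos hq0.le hu.ne'
  have : 1 - q ≠ 0 := by linarith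
  rw [← geom_sum_mul_neg, mul_pow]
  field_simp

lemma pow_div_geom_sum_pow_le (hq0 : 0 < q) (hq1 : q < 1) (hu : 0 < u) :
    q ^ (u * K) / (∑ j ∈ range u, q ^ j) ^ (K + 1) ≤ (1 - q) ^ (K + 1) * powGeom K (q ^ u) := by
  have hqu : q ^ u < 1 := pow_lt_one₀ hq0.le hq1 hu.ne'
  rw [pow_mul, ← one_sub_pow_mul_div_one_sub_pow _ hq0 hq1 hu]
  gcongr
  exact div_one_sub_pow_le_powGeom (by positivity) hqu

lemma one_sub_pow_mul_powGeom_le (hK : K ≠ 0) (hq0 : 0 < q) (hq1 : q < 1) (hu : 0 < u) :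
    (1 - q) ^ (K + 1) * powGeom K (q ^ u) ≤ q ^ u / (∑ j ∈ range u, q ^ j) ^ (K + 1) := by
  have hqu : q ^ u < 1 := pow_lt_one₀ hq0.le hq1 hu.ne'
  rw [← one_sub_pow_mul_div_one_sub_pow _ hq0 hq1 hu]
  gcongr
  exact powGeom_le_div_one_sub_pow hK (by positivity) hqu

lemma tendsto_one_sub_pow_mul_powGeom (hK : K ≠ 0) (hu : 0 < u) :
    Tendsto (fun q : ℝ => (1 - q) ^ (K + 1) * powGeom K (q ^ u)) (𝓝[Set.Ioo 0 1] 1)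
      (𝓝 (1 / (u : ℝ) ^ (K + 1))) := by
  refine tendsto_of_tendsto_of_tendsto_of_le_of_le'
    (tendsto_nhdsWithin_of_tendsto_nhds (tendsto_pow_div_geom_sum_pow (u * K) hu (K + 1)))
    (tendsto_nhdsWithin_of_tendsto_nhds (tendsto_pow_div_geom_sum_pow u hu (K + 1))) ?_ ?_
  all_goals filter_upwards [self_mem_nhdsWithin] with q ⟨hq0, hq1⟩
  · exact pow_div_geom_sum_pow_le hq0 hq1 hu
  · exact one_sub_pow_mul_powGeom_le hK hq0 hq1 hu

lemma one_sub_pow_mul_powGeom_le_div (hK : K ≠ 0) (hq0 : 0 < q) (hq1 : q < 1) (hu : 0 < u) :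
    (1 - q) ^ (K + 1) * powGeom K (q ^ u) ≤ ((K + 1 : ℕ) : ℝ) ^ (K + 1) / (u : ℝ) ^ (K + 1) := by
  refine (one_sub_pow_mul_powGeom_le hK hq0 hq1 hu).trans ?_
  rw [div_le_div_iff₀ (pow_pos (geom_sum_pos hq0.le hu.ne') _) (by positivity), mul_comm]
  exact pow_mul_pow_le_geom_sum_pow hq0.le hq1.le K.succ_ne_zero u

end lambert

lemma gR_eq_tsum_powGeom {K : ℕ} (hK : K ≠ 0) {q : ℝ} (hq0 : 0 < q) (hq1 : q < 1) :
    gR (K + 1) q = ∑' u : ℕ, if 0 < u then powGeom K (q ^ u) else 0 := by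
  set f : ℕ × ℕ → ℝ := fun p =>
    if 0 < p.1 ∧ 0 < p.2 then (p.2 : ℝ) ^ K / K ! * q ^ (p.1 * p.2) else 0
  have hf_nonneg : 0 ≤ f := fun p => by dsimp only [f]; split_ifs <;> positivity
  have hrow (u : ℕ) : HasSum (fun v => f (u, v)) (if 0 < u then powGeom K (q ^ u) else 0) := by
    rcases Nat.eq_zero_or_pos u with rfl | hu
    · simp [f, hasSum_zero]
    have hqu : q ^ u < 1 := pow_lt_one₀ hq0.le hq1 hu.ne'
    rw [if_pos hu]
    convert (summable_powGeom K (by positivity) hqu).hasSum using 1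
    · ext v
      rcases Nat.eq_zero_or_pos v with rfl | hv
      · simp [f, hK]
      · simp [f, hu, hv, pow_mul]
    · rfl
  have hf : Summable f := by
    refine (summable_prod_of_nonneg hf_nonneg).mpr ⟨fun u => (hrow u).summable, ?_⟩
    refine Summable.of_nonneg_of_le (fun u => tsum_nonneg fun v => hf_nonneg (u, v)) (fun u => ?_)
      ((summable_geometric_of_lt_one hq0.le hq1).div_const ((1 - q) ^ (K + 1)))
    rw [(hrow u).tsum_eq]
    rcases Nat.eq_zero_or_pos u with rfl | hu
    · rw [if_neg (lt_irrefl 0)]; positivity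
    have hqu : q ^ u < 1 := pow_lt_one₀ hq0.le hq1 hu.ne'
    rw [if_pos hu]
    refine (powGeom_le_div_one_sub_pow hK (by positivity) hqu).trans ?_
    gcongr
    exact pow_le_of_le_one hq0.le hq1.le hu.ne'
  simp only [gR, Nat.add_sub_cancel]
  rw [hf.tsum_prod' fun u => (hrow u).summable]
  exact tsum_congr fun u => (hrow u).tsum_eq

/-- `lim_{q → 1⁻} (1−q)^k g_k(q) = ζ(k)` for `k ≥ 2`. -/
theorem stmt_11 (k : ℕ) (hk : 2 ≤ k) :
    Filter.Tendsto (fun q : ℝ => (1 - q) ^ k * gR k q)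
      (nhdsWithin 1 (Set.Ioo (0 : ℝ) 1)) (nhds (zeta1 k)) := by
  obtain ⟨K, rfl⟩ : ∃ K, k = K + 1 := ⟨k - 1, by omega⟩
  have hK : K ≠ 0 := by omega
  have hbound : Summable fun u : ℕ => ((K + 1 : ℕ) : ℝ) ^ (K + 1) / (u : ℝ) ^ (K + 1) := by
    simpa only [mul_one_div] using
      (Real.summable_one_div_nat_pow.mpr (by omega)).mul_left (((K + 1 : ℕ) : ℝ) ^ (K + 1))
  have hlim := tendsto_tsum_of_dominated_convergence (𝓕 := 𝓝[Set.Ioo 0 1] 1)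
    (f := fun (q : ℝ) (u : ℕ) => (1 - q) ^ (K + 1) * if 0 < u then powGeom K (q ^ u) else 0)
    (g := fun u => if 0 < u then 1 / (u : ℝ) ^ (K + 1) else 0) hbound
    (fun u => by
      rcases Nat.eq_zero_or_pos u with rfl | hu
      · simp
      · simpa [hu] using tendsto_one_sub_pow_mul_powGeom hK hu)
    (by
      filter_upwards [self_mem_nhdsWithin] with q ⟨hq0, hq1⟩ u
      rcases Nat.eq_zero_or_pos u with rfl | hu
      · simp
      have hlower := pow_div_geom_sum_pow_le (K := K) hq0 hq1 hu
      rw [if_pos hu, Real.norm_of_nonneg (le_trans (by positivity) hlower)]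
      exact one_sub_pow_mul_powGeom_le_div hK hq0 hq1 hu)
  refine hlim.congr' ?_
  filter_upwards [self_mem_nhdsWithin] with q ⟨hq0, hq1⟩
  rw [gR_eq_tsum_powGeom hK hq0 hq1, tsum_mul_left]
end

section
/- For all k_1, k_2 ≥ 1 one has the shuffle-type product formula g^sh_{k_1} · g^sh_{k_2} = Σ_{a+b = k_1+k_2, a ≥ 1, b ≥ 1} ( C(b−1, k_1−1) + C(b−1, k_2−1) )·g^sh_{a,b}, where g^sh_k = g_k and g^sh_{a,b} = g_{a,b} + δ_{a,1}·(1/2)·(g^{(1)}_b − g_b), equivalent to the generating-series functional equation T_sh(X)·T_sh(Y) = T_sh(X, X+Y) + T_sh(Y, X+Y). -/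
open Finset PowerSeries

/-! Comparing coefficients of `q^n`, the product `g_{k₁} g_{k₂}` is a sum over the positive
solutions of `u₁v₁ + u₂v₂ = n`, which we split according to `v₁ > v₂`, `v₁ < v₂`, `v₁ = v₂`.
On `v₁ > v₂` the substitution `(u₁, u₂, v₁, v₂) ↦ (u₁, u₁ + u₂, v₁ - v₂, v₂)` is a bijection onto
the index set of `g_{a,b}`, and expanding `v₁^{k₁-1} = ((v₁ - v₂) + v₂)^{k₁-1}` binomially yields
`Σ_a C(b-1, k₂-1) g_{a,b}`; the part `v₁ < v₂` is its mirror image. On the diagonal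
`v₁ = v₂ = n / u` with `u = u₁ + u₂ ∣ n`, and each divisor `u` occurs `u - 1` times; this gives
`C(k₁+k₂-2, k₂-1) (g^{(1)}_{k₁+k₂-1} - g_{k₁+k₂-1})`, which is the regularizing term of
`g^sh_{1,k₁+k₂-1}` because the two binomial coefficients at `a = 1` agree. -/

noncomputable def weight (k v : ℕ) : ℚ := (v : ℚ) ^ (k - 1) / (Nat.factorial (k - 1) : ℚ)

lemma weight_succ (m v : ℕ) : weight (m + 1) v = (v : ℚ) ^ m / m.factorial := rfl

lemma weight_mul_weight {k1 k2 : ℕ} (h1 : 1 ≤ k1) (h2 : 1 ≤ k2) (v : ℕ) :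
    weight k1 v * weight k2 v = ((k1 + k2 - 2).choose (k2 - 1) : ℚ) * weight (k1 + k2 - 1) v := by
  obtain ⟨m, rfl⟩ := Nat.exists_eq_add_of_le' h1
  obtain ⟨l, rfl⟩ := Nat.exists_eq_add_of_le' h2
  rw [show m + 1 + (l + 1) - 2 = m + l by omega, show m + 1 + (l + 1) - 1 = m + l + 1 by omega,
    show l + 1 - 1 = l by omega, ← Nat.choose_symm_add, Nat.cast_add_choose, weight_succ,
    weight_succ, weight_succ, pow_add]
  field_simp

lemma weight_add (m x y : ℕ) :
    weight (m + 1) (x + y) = ∑ j ∈ range (m + 1), weight (j + 1) x * weight (m - j + 1) y := by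
  rw [weight_succ, Nat.cast_add, add_pow, sum_div]
  refine sum_congr rfl fun j hj => ?_
  rw [Nat.cast_choose ℚ (Nat.le_of_lt_succ (mem_range.mp hj)), weight_succ, weight_succ]
  field_simp

lemma weight_add_mul_weight {k1 k2 : ℕ} (h1 : 1 ≤ k1) (h2 : 1 ≤ k2) (x y : ℕ) :
    weight k1 (x + y) * weight k2 y = ∑ a ∈ Icc 1 (k1 + k2 - 1),
      ((k1 + k2 - a - 1).choose (k2 - 1) : ℚ) * (weight a x * weight (k1 + k2 - a) y) := by
  obtain ⟨m, rfl⟩ := Nat.exists_eq_add_of_le' h1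
  have hIcc : Icc 1 (m + 1 + k2 - 1) = Ico 1 (m + k2 + 1) := by
    ext a; simp only [mem_Icc, mem_Ico]; omega
  rw [weight_add, sum_mul, hIcc, sum_Ico_eq_sum_range, show m + k2 + 1 - 1 = m + k2 by omega]
  refine sum_subset_zero_on_sdiff (range_subset_range.mpr (by omega)) ?_ ?_
  · intro j hj
    simp only [mem_sdiff, mem_range] at hj
    rw [Nat.choose_eq_zero_of_lt (by omega), Nat.cast_zero, zero_mul]
  · intro j hj
    have hj : j ≤ m := Nat.le_of_lt_succ (mem_range.mp hj)
    rw [add_comm 1 j, mul_assoc, weight_mul_weight (by omega) h2,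
      show m - j + 1 + k2 - 2 = m + 1 + k2 - (j + 1) - 1 by omega,
      show m - j + 1 + k2 - 1 = m + 1 + k2 - (j + 1) by omega]
    ring

abbrev Quad := ℕ × ℕ × ℕ × ℕ

def quadRange (n : ℕ) : Finset Quad :=
  range (n + 1) ×ˢ range (n + 1) ×ˢ range (n + 1) ×ˢ range (n + 1)

def solutions (n : ℕ) : Finset Quad :=
  (quadRange n).filter fun x => 0 < x.1 ∧ 0 < x.2.1 ∧ 0 < x.2.2.1 ∧ 0 < x.2.2.2 ∧
    x.1 * x.2.2.1 + x.2.1 * x.2.2.2 = n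

def orderedSolutions (n : ℕ) : Finset Quad :=
  (quadRange n).filter fun x => 0 < x.1 ∧ x.1 < x.2.1 ∧ 0 < x.2.2.1 ∧ 0 < x.2.2.2 ∧
    x.1 * x.2.2.1 + x.2.1 * x.2.2.2 = n

lemma mem_quadRange_of_mul_add_mul {u1 u2 v1 v2 n : ℕ} (hu1 : 0 < u1) (hu2 : 0 < u2)
    (hv1 : 0 < v1) (hv2 : 0 < v2) (h : u1 * v1 + u2 * v2 = n) : (u1, u2, v1, v2) ∈ quadRange n := by
  simp only [quadRange, mem_product, mem_range, Nat.lt_succ_iff]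
  refine ⟨?_, ?_, ?_, ?_⟩ <;> nlinarith

lemma mem_solutions {u1 u2 v1 v2 n : ℕ} : (u1, u2, v1, v2) ∈ solutions n ↔
    0 < u1 ∧ 0 < u2 ∧ 0 < v1 ∧ 0 < v2 ∧ u1 * v1 + u2 * v2 = n := by
  rw [solutions, mem_filter, and_iff_right_of_imp]
  rintro ⟨hu1, hu2, hv1, hv2, h⟩
  exact mem_quadRange_of_mul_add_mul hu1 hu2 hv1 hv2 h

lemma mem_orderedSolutions {u1 u2 v1 v2 n : ℕ} : (u1, u2, v1, v2) ∈ orderedSolutions n ↔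
    0 < u1 ∧ u1 < u2 ∧ 0 < v1 ∧ 0 < v2 ∧ u1 * v1 + u2 * v2 = n := by
  rw [orderedSolutions, mem_filter, and_iff_right_of_imp]
  rintro ⟨hu1, hu12, hv1, hv2, h⟩
  exact mem_quadRange_of_mul_add_mul hu1 (hu1.trans hu12) hv1 hv2 h

lemma sum_eq_sum_filter_lt_add_sum_filter_eq_add_sum_filter_gt {α β M : Type*} [LinearOrder β]
    [AddCommMonoid M] (s : Finset α) (p q : α → β) (f : α → M) :
    ∑ x ∈ s, f x = ∑ x ∈ s.filter (fun x => p x < q x), f x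
      + ∑ x ∈ s.filter (fun x => p x = q x), f x + ∑ x ∈ s.filter (fun x => q x < p x), f x := by
  have h_eq : s.filter (fun x => ¬p x < q x ∧ p x = q x) = s.filter (fun x => p x = q x) :=
    filter_congr fun x _ => ⟨And.right, fun h => ⟨h.not_lt, h⟩⟩
  have h_gt : s.filter (fun x => ¬p x < q x ∧ ¬p x = q x) = s.filter (fun x => q x < p x) :=
    filter_congr fun x _ =>
      ⟨fun h => lt_of_le_of_ne (not_lt.mp h.1) (Ne.symm h.2), fun h => ⟨lt_asymm h, ne_of_gt h⟩⟩
  rw [add_assoc, ← sum_filter_add_sum_filter_not s (fun x => p x < q x),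
    ← sum_filter_add_sum_filter_not (s.filter fun x => ¬p x < q x) (fun x => p x = q x),
    filter_filter, filter_filter, h_eq, h_gt]

lemma sum_solutions_filter_lt {M : Type*} [AddCommMonoid M] (n : ℕ) (F : ℕ → ℕ → M) :
    ∑ x ∈ (solutions n).filter (fun x => x.2.2.1 < x.2.2.2), F x.2.2.1 x.2.2.2
      = ∑ x ∈ (solutions n).filter (fun x => x.2.2.2 < x.2.2.1), F x.2.2.2 x.2.2.1 := by
  have swap_mem : ∀ {x : Quad}, x ∈ (solutions n).filter (fun x => x.2.2.1 < x.2.2.2) ↔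
      (x.2.1, x.1, x.2.2.2, x.2.2.1) ∈ (solutions n).filter (fun x => x.2.2.2 < x.2.2.1) := by
    rintro ⟨u1, u2, v1, v2⟩
    simp only [mem_filter, mem_solutions, add_comm (u1 * v1)]
    tauto
  refine sum_nbij' (fun x => (x.2.1, x.1, x.2.2.2, x.2.2.1))
    (fun x => (x.2.1, x.1, x.2.2.2, x.2.2.1))
    (fun x hx => swap_mem.mp hx) (fun x hx => swap_mem.mpr hx) (fun _ _ => rfl) (fun _ _ => rfl)
    (fun _ _ => rfl)

lemma sum_solutions_filter_gt {M : Type*} [AddCommMonoid M] (n : ℕ) (F : ℕ → ℕ → M) :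
    ∑ x ∈ (solutions n).filter (fun x => x.2.2.2 < x.2.2.1), F x.2.2.1 x.2.2.2
      = ∑ x ∈ orderedSolutions n, F (x.2.2.1 + x.2.2.2) x.2.2.2 := by
  refine sum_nbij' (fun x => (x.1, x.1 + x.2.1, x.2.2.1 - x.2.2.2, x.2.2.2))
    (fun x => (x.1, x.2.1 - x.1, x.2.2.1 + x.2.2.2, x.2.2.2)) ?_ ?_ ?_ ?_ ?_
  · rintro ⟨u1, u2, v1, v2⟩ hx
    simp only [mem_filter, mem_solutions] at hx
    obtain ⟨⟨hu1, hu2, -, hv2, hn⟩, hv⟩ := hx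
    obtain ⟨w, rfl⟩ := Nat.exists_eq_add_of_lt hv
    simp only [mem_orderedSolutions, ← hn]
    refine ⟨hu1, by omega, by omega, hv2, ?_⟩
    rw [show v2 + w + 1 - v2 = w + 1 by omega]
    ring
  · rintro ⟨u1, u2, v1, v2⟩ hx
    obtain ⟨hu1, hu12, hv1, hv2, hn⟩ := mem_orderedSolutions.mp hx
    obtain ⟨w, rfl⟩ := Nat.exists_eq_add_of_lt hu12
    simp only [mem_filter, mem_solutions, ← hn]
    refine ⟨⟨hu1, by omega, by omega, hv2, ?_⟩, by omega⟩
    rw [show u1 + w + 1 - u1 = w + 1 by omega]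
    ring
  · rintro ⟨u1, u2, v1, v2⟩ hx
    simp only [mem_filter] at hx
    simp only [Nat.add_sub_cancel_left, Nat.sub_add_cancel hx.2.le]
  · rintro ⟨u1, u2, v1, v2⟩ hx
    obtain ⟨-, hu12, -⟩ := mem_orderedSolutions.mp hx
    simp only [Nat.add_sub_cancel, Nat.add_sub_of_le hu12.le]
  · rintro ⟨u1, u2, v1, v2⟩ hx
    simp only [mem_filter] at hx
    simp only [Nat.sub_add_cancel hx.2.le]

lemma sum_solutions_filter_eq {R : Type*} [Ring R] (n : ℕ) (F : ℕ → R) :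
    ∑ x ∈ (solutions n).filter (fun x => x.2.2.1 = x.2.2.2), F x.2.2.1
      = ∑ u ∈ n.divisors, ((u : R) - 1) * F (n / u) := by
  have hcard : ∀ u ∈ n.divisors, ((u : R) - 1) * F (n / u) = ∑ _c ∈ Ioo 0 u, F (n / u) := by
    intro u hu
    rw [sum_const, Nat.card_Ioo, Nat.sub_zero, nsmul_eq_mul,
      Nat.cast_sub (Nat.pos_of_mem_divisors hu), Nat.cast_one]
  rw [sum_congr rfl hcard, sum_sigma']
  symm
  refine sum_nbij' (fun z => (z.2, z.1 - z.2, n / z.1, n / z.1))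
    (fun x => ⟨x.1 + x.2.1, x.1⟩) ?_ ?_ ?_ ?_ ?_
  · rintro ⟨u, c⟩ hz
    simp only [mem_sigma, Nat.mem_divisors, mem_Ioo] at hz
    obtain ⟨⟨⟨v, hv⟩, hn⟩, hc, hcu⟩ := hz
    have hv0 : 0 < v := Nat.pos_of_ne_zero (by rintro rfl; simp_all)
    simp only [mem_filter, mem_solutions, hv, Nat.mul_div_cancel_left _ (hc.trans hcu), and_true]
    exact ⟨hc, by omega, hv0, hv0, by rw [← add_mul, Nat.add_sub_of_le hcu.le]⟩
  · rintro ⟨u1, u2, v1, v2⟩ hx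
    simp only [mem_filter, mem_solutions] at hx
    obtain ⟨⟨hu1, hu2, hv1, -, hn⟩, rfl⟩ := hx
    simp only [mem_sigma, Nat.mem_divisors, mem_Ioo, ← hn, ← add_mul]
    exact ⟨⟨dvd_mul_right _ _, by positivity⟩, hu1, by omega⟩
  · rintro ⟨u, c⟩ hz
    simp only [mem_sigma, mem_Ioo] at hz
    simp only [Nat.add_sub_of_le hz.2.2.le]
  · rintro ⟨u1, u2, v1, v2⟩ hx
    simp only [mem_filter, mem_solutions] at hx
    obtain ⟨⟨hu1, hu2, hv1, -, rfl⟩, rfl⟩ := hx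
    simp only [← add_mul, Nat.add_sub_cancel_left,
      Nat.mul_div_cancel_left _ (by omega : 0 < u1 + u2)]
  · intro _ _
    rfl

lemma coeff_g (k n : ℕ) : coeff n (g k) = ∑ u ∈ n.divisors, weight k (n / u) := by
  simp [g, gb, weight]

lemma coeff_gb_one_sub_g (k n : ℕ) :
    coeff n (gb 1 k - g k) = ∑ u ∈ n.divisors, ((u : ℚ) - 1) * weight k (n / u) := by
  simp only [map_sub, coeff_g, gb, coeff_mk, pow_one, Nat.factorial_one, Nat.cast_one, div_one,
    ← sum_sub_distrib, weight]
  exact sum_congr rfl fun _ _ => by ring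

lemma coeff_g2 (k1 k2 n : ℕ) :
    coeff n (g2 k1 k2) = ∑ x ∈ orderedSolutions n, weight k1 x.2.2.1 * weight k2 x.2.2.2 := by
  simp only [g2, gb2, coeff_mk, pow_zero, Nat.factorial_zero, Nat.cast_one, div_one, one_mul,
    orderedSolutions, sum_filter, quadRange, sum_product, weight]

lemma coeff_g_mul_g (k1 k2 n : ℕ) :
    coeff n (g k1 * g k2) = ∑ x ∈ solutions n, weight k1 x.2.2.1 * weight k2 x.2.2.2 := by
  simp only [coeff_mul, coeff_g, sum_mul_sum, ← sum_product']
  rw [sum_sigma']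
  refine sum_nbij' (fun z => (z.2.1, z.2.2, z.1.1 / z.2.1, z.1.2 / z.2.2))
    (fun x => ⟨(x.1 * x.2.2.1, x.2.1 * x.2.2.2), (x.1, x.2.1)⟩) ?_ ?_ ?_ ?_ ?_
  · rintro ⟨⟨_, _⟩, u1, u2⟩ hz
    simp only [mem_sigma, HasAntidiagonal.mem_antidiagonal, mem_product, Nat.mem_divisors] at hz
    obtain ⟨hn, ⟨⟨v1, rfl⟩, h1⟩, ⟨v2, rfl⟩, h2⟩ := hz
    obtain ⟨hu1, hv1⟩ := mul_ne_zero_iff.mp h1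
    obtain ⟨hu2, hv2⟩ := mul_ne_zero_iff.mp h2
    simp only [Nat.mul_div_cancel_left _ (Nat.pos_of_ne_zero hu1),
      Nat.mul_div_cancel_left _ (Nat.pos_of_ne_zero hu2), mem_solutions]
    omega
  · rintro ⟨u1, u2, v1, v2⟩ hx
    obtain ⟨hu1, hu2, hv1, hv2, hn⟩ := mem_solutions.mp hx
    simp only [mem_sigma, HasAntidiagonal.mem_antidiagonal, mem_product, Nat.mem_divisors]
    exact ⟨hn, ⟨dvd_mul_right _ _, by positivity⟩, dvd_mul_right _ _, by positivity⟩
  · rintro ⟨⟨_, _⟩, u1, u2⟩ hz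
    simp only [mem_sigma, HasAntidiagonal.mem_antidiagonal, mem_product, Nat.mem_divisors] at hz
    obtain ⟨-, ⟨hd1, -⟩, hd2, -⟩ := hz
    simp only [Nat.mul_div_cancel' hd1, Nat.mul_div_cancel' hd2]
  · rintro ⟨u1, u2, v1, v2⟩ hx
    obtain ⟨hu1, hu2, -⟩ := mem_solutions.mp hx
    simp only [Nat.mul_div_cancel_left _ hu1, Nat.mul_div_cancel_left _ hu2]
  · intro _ _
    rfl

lemma sum_solutions_filter_gt_weight {k1 k2 : ℕ} (h1 : 1 ≤ k1) (h2 : 1 ≤ k2) (n : ℕ) :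
    ∑ x ∈ (solutions n).filter (fun x => x.2.2.2 < x.2.2.1),
        weight k1 x.2.2.1 * weight k2 x.2.2.2
      = ∑ a ∈ Icc 1 (k1 + k2 - 1),
          ((k1 + k2 - a - 1).choose (k2 - 1) : ℚ) * coeff n (g2 a (k1 + k2 - a)) := by
  rw [sum_solutions_filter_gt n (fun v1 v2 => weight k1 v1 * weight k2 v2)]
  simp only [weight_add_mul_weight h1 h2, coeff_g2, mul_sum]
  exact sum_comm

lemma sum_solutions_filter_eq_weight {k1 k2 : ℕ} (h1 : 1 ≤ k1) (h2 : 1 ≤ k2) (n : ℕ) :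
    ∑ x ∈ (solutions n).filter (fun x => x.2.2.1 = x.2.2.2),
        weight k1 x.2.2.1 * weight k2 x.2.2.2
      = ((k1 + k2 - 2).choose (k2 - 1) : ℚ) * coeff n (gb 1 (k1 + k2 - 1) - g (k1 + k2 - 1)) := by
  rw [sum_congr rfl fun x hx => by rw [← (mem_filter.mp hx).2, weight_mul_weight h1 h2],
    ← mul_sum, sum_solutions_filter_eq, coeff_gb_one_sub_g]

lemma g_mul_g {k1 k2 : ℕ} (h1 : 1 ≤ k1) (h2 : 1 ≤ k2) :
    g k1 * g k2 = ∑ a ∈ Icc 1 (k1 + k2 - 1),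
        (((k1 + k2 - a - 1).choose (k1 - 1) : ℚ) + (k1 + k2 - a - 1).choose (k2 - 1)) •
          g2 a (k1 + k2 - a)
      + ((k1 + k2 - 2).choose (k2 - 1) : ℚ) • (gb 1 (k1 + k2 - 1) - g (k1 + k2 - 1)) := by
  ext n
  have h_lt : ∑ x ∈ (solutions n).filter (fun x => x.2.2.1 < x.2.2.2),
      weight k1 x.2.2.1 * weight k2 x.2.2.2 = ∑ a ∈ Icc 1 (k1 + k2 - 1),
        ((k1 + k2 - a - 1).choose (k1 - 1) : ℚ) * coeff n (g2 a (k1 + k2 - a)) := by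
    rw [sum_solutions_filter_lt n (fun v1 v2 => weight k1 v1 * weight k2 v2)]
    simp only [mul_comm (weight k1 _)]
    rw [sum_solutions_filter_gt_weight h2 h1, add_comm k2 k1]
  rw [coeff_g_mul_g,
    sum_eq_sum_filter_lt_add_sum_filter_eq_add_sum_filter_gt _ (fun x => x.2.2.1)
      (fun x => x.2.2.2),
    h_lt, sum_solutions_filter_eq_weight h1 h2,
    sum_solutions_filter_gt_weight h1 h2]
  simp only [map_add, map_sum, map_smul, smul_eq_mul, add_mul, sum_add_distrib]
  ring

lemma sum_smul_gsh2 {K : ℕ} (hK : 2 ≤ K) (c : ℕ → ℚ) :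
    ∑ a ∈ Icc 1 (K - 1), c a • gsh2 a (K - a)
      = ∑ a ∈ Icc 1 (K - 1), c a • g2 a (K - a) + (c 1 / 2) • (gb 1 (K - 1) - g (K - 1)) := by
  simp only [gsh2, smul_add, sum_add_distrib, ite_smul, zero_smul, smul_ite, smul_zero,
    sum_ite_eq', mem_Icc]
  rw [if_pos (by omega), smul_smul, mul_one_div]

/-- The shuffle-type product formula
`g^sh_{k₁} g^sh_{k₂} = Σ_{a+b=k₁+k₂} (C(b−1,k₁−1)+C(b−1,k₂−1)) g^sh_{a,b}`. -/
theorem stmt_13 (k1 k2 : ℕ) (h1 : 1 ≤ k1) (h2 : 1 ≤ k2) :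
    g k1 * g k2 =
      ∑ a ∈ Finset.Icc 1 (k1 + k2 - 1),
        ((Nat.choose (k1 + k2 - a - 1) (k1 - 1) : ℚ)
          + (Nat.choose (k1 + k2 - a - 1) (k2 - 1) : ℚ)) • gsh2 a (k1 + k2 - a) := by
  rw [sum_smul_gsh2 (by omega : 2 ≤ k1 + k2), g_mul_g h1 h2]
  congr 2
  rw [show k1 + k2 - 1 - 1 = k1 + k2 - 2 by omega,
    Nat.choose_symm_of_eq_add (show k1 + k2 - 2 = (k1 - 1) + (k2 - 1) by omega)]
  ring
end

section
/- For all k_1, k_2 ≥ 2, the series g^{(0,1)}_{k_1,k_2} lies in the ℚ-linear span of the series g^sh indexed by compositions of weight at most k_1 + k_2 + 1; i.e., g^{(0,1)}_{k_1,k_2} is a ℚ-linear combination of the series 1, g_m (m ≤ k_1+k_2+1), g^sh_{a,b} (a+b ≤ k_1+k_2+1), and g^sh_{a,b,c} (a+b+c ≤ k_1+k_2+1). -/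
open Finset PowerSeries

/-- The spanning set: `1`, the `g^sh` of depth ≤ 3 and weight ≤ N. -/
def gshSpanSet (N : ℕ) : Set (PowerSeries ℚ) :=
  {1} ∪ {f | ∃ m, 1 ≤ m ∧ m ≤ N ∧ f = g m}
      ∪ {f | ∃ a b, 1 ≤ a ∧ 1 ≤ b ∧ a + b ≤ N ∧ f = gsh2 a b}
      ∪ {f | ∃ a b c, 1 ≤ a ∧ 1 ≤ b ∧ 1 ≤ c ∧ a + b + c ≤ N ∧ f = gsh3 a b c}

/-!
Expand the coefficients of `g_1 · g_{k₁,k₂}`, indexed by `wx + u₁v₁ + u₂v₂ = n`, according to the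
position of `w` relative to `u₁ < u₂`: three depth-three series, and two merged terms (`w = u₁` or
`w = u₂`) in which the sum over `x + v = W` is a polynomial in `W` by Faulhaber's formula.
Conjugating the partition `u₁v₁ + u₂v₂` first swaps the roles of the `u`'s and the `v`'s; in the
same expansion the merged terms then acquire the multiplicity `u₂ - 2` and produce
`g^{(0,1)}_{k₁,k₂}`, while conjugation of the depth-three partitions and the binomial theorem turn
the depth-three terms back into `g`'s. Comparing the two expansions
leaves `g^{(0,1)}_{k₁,k₂} + g_{1,k₁,k₂} + g_{k₁,1,k₂}` as a combination of `g_{a,b}` and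
`g_{a,b,c}` with `a, b ≥ 2`, which are their own regularizations; the correction terms in
`g^sh_{k₁,1,k₂} + g^sh_{1,k₁,k₂}` then isolate `g^{(0,1)}_{k₁,k₂}`.
-/

namespace QSeries

/-- `((u₁, u₂), (v₁, v₂))` indexes the term `q^{u₁v₁ + u₂v₂}` of a depth-two series. -/
abbrev Idx2 : Type := (ℕ × ℕ) × (ℕ × ℕ)
abbrev Idx3 : Type := (ℕ × ℕ × ℕ) × (ℕ × ℕ × ℕ)
/-- `((w, x), p)` indexes the term `q^{wx} · q^{u₁v₁ + u₂v₂}` of the product `g_1 · g_{k₁,k₂}`. -/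
abbrev Idx12 : Type := (ℕ × ℕ) × Idx2

def D2 (n : ℕ) : Finset Idx2 :=
  ((range (n+1) ×ˢ range (n+1)) ×ˢ (range (n+1) ×ˢ range (n+1))).filter
    (fun p => 0 < p.1.1 ∧ p.1.1 < p.1.2 ∧ 0 < p.2.1 ∧ 0 < p.2.2 ∧
      p.1.1 * p.2.1 + p.1.2 * p.2.2 = n)

def D3 (n : ℕ) : Finset Idx3 :=
  ((range (n+1) ×ˢ range (n+1) ×ˢ range (n+1)) ×ˢ
      (range (n+1) ×ˢ range (n+1) ×ˢ range (n+1))).filter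
    (fun p => 0 < p.1.1 ∧ p.1.1 < p.1.2.1 ∧ p.1.2.1 < p.1.2.2 ∧ 0 < p.2.1 ∧ 0 < p.2.2.1 ∧
      0 < p.2.2.2 ∧ p.1.1 * p.2.1 + p.1.2.1 * p.2.2.1 + p.1.2.2 * p.2.2.2 = n)

def D12 (n : ℕ) : Finset Idx12 :=
  ((range (n+1) ×ˢ range (n+1)) ×ˢ (range (n+1) ×ˢ range (n+1)) ×ˢ
      (range (n+1) ×ˢ range (n+1))).filter
    (fun p => 0 < p.1.1 ∧ 0 < p.1.2 ∧ 0 < p.2.1.1 ∧ p.2.1.1 < p.2.1.2 ∧ 0 < p.2.2.1 ∧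
      0 < p.2.2.2 ∧ p.1.1 * p.1.2 + p.2.1.1 * p.2.2.1 + p.2.1.2 * p.2.2.2 = n)

lemma mem_D2 {n u1 u2 v1 v2 : ℕ} : ((u1, u2), (v1, v2)) ∈ D2 n ↔
    0 < u1 ∧ u1 < u2 ∧ 0 < v1 ∧ 0 < v2 ∧ u1 * v1 + u2 * v2 = n := by
  simp only [D2, mem_filter, mem_product, mem_range, and_iff_right_iff_imp]
  rintro ⟨h1, h2, h3, h4, h5⟩
  refine ⟨⟨?_, ?_⟩, ?_, ?_⟩ <;> nlinarith

lemma mem_D3 {n t1 t2 t3 s1 s2 s3 : ℕ} : ((t1, t2, t3), (s1, s2, s3)) ∈ D3 n ↔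
    0 < t1 ∧ t1 < t2 ∧ t2 < t3 ∧ 0 < s1 ∧ 0 < s2 ∧ 0 < s3 ∧
      t1 * s1 + t2 * s2 + t3 * s3 = n := by
  simp only [D3, mem_filter, mem_product, mem_range, and_iff_right_iff_imp]
  rintro ⟨h1, h2, h3, h4, h5, h6, h7⟩
  refine ⟨⟨?_, ?_, ?_⟩, ?_, ?_, ?_⟩ <;> nlinarith

lemma mem_D12 {n w x u1 u2 v1 v2 : ℕ} : ((w, x), (u1, u2), (v1, v2)) ∈ D12 n ↔
    0 < w ∧ 0 < x ∧ 0 < u1 ∧ u1 < u2 ∧ 0 < v1 ∧ 0 < v2 ∧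
      w * x + u1 * v1 + u2 * v2 = n := by
  simp only [D12, mem_filter, mem_product, mem_range, and_iff_right_iff_imp]
  rintro ⟨h1, h2, h3, h4, h5, h6, h7⟩
  refine ⟨⟨?_, ?_⟩, ⟨?_, ?_⟩, ?_, ?_⟩ <;> nlinarith

lemma mem_D12_iff_exists {n w x : ℕ} {p : Idx2} :
    ((w, x), p) ∈ D12 n ↔ 0 < w ∧ 0 < x ∧ ∃ m, p ∈ D2 m ∧ w * x + m = n := by
  obtain ⟨⟨u1, u2⟩, v1, v2⟩ := p
  simp only [mem_D12, mem_D2]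
  constructor
  · rintro ⟨hw, hx, h1, h2, h3, h4, rfl⟩
    exact ⟨hw, hx, _, ⟨h1, h2, h3, h4, rfl⟩, by ring⟩
  · rintro ⟨hw, hx, _, ⟨h1, h2, h3, h4, rfl⟩, rfl⟩
    exact ⟨hw, hx, h1, h2, h3, h4, by ring⟩

/-- Conjugation of the partition `u₁v₁ + u₂v₂`: transposing its Young diagram gives
`v₂ · (u₂ - u₁) + (v₁ + v₂) · u₁`. -/
def conj2 (p : Idx2) : Idx2 := ((p.2.2, p.2.1 + p.2.2), (p.1.2 - p.1.1, p.1.1))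

def conj3 (q : Idx3) : Idx3 :=
  ((q.2.2.2, q.2.2.1 + q.2.2.2, q.2.1 + q.2.2.1 + q.2.2.2),
    (q.1.2.2 - q.1.2.1, q.1.2.1 - q.1.1, q.1.1))

def conj12 (p : Idx12) : Idx12 := (p.1, conj2 p.2)

lemma conj2_mem_D2 {n : ℕ} {p : Idx2} (hp : p ∈ D2 n) : conj2 p ∈ D2 n := by
  obtain ⟨⟨u1, u2⟩, v1, v2⟩ := p
  obtain ⟨h1, h2, h3, h4, rfl⟩ := mem_D2.1 hp
  obtain ⟨d, rfl⟩ := Nat.exists_eq_add_of_lt h2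
  simp only [conj2, mem_D2, show u1 + d + 1 - u1 = d + 1 by omega]
  exact ⟨h4, by omega, by omega, h1, by ring⟩

lemma conj2_conj2 {n : ℕ} {p : Idx2} (hp : p ∈ D2 n) : conj2 (conj2 p) = p := by
  obtain ⟨⟨u1, u2⟩, v1, v2⟩ := p
  obtain ⟨h1, h2, -⟩ := mem_D2.1 hp
  simp only [conj2, Prod.mk.injEq, true_and, and_true]
  omega

lemma conj3_mem_D3 {n : ℕ} {q : Idx3} (hq : q ∈ D3 n) : conj3 q ∈ D3 n := by
  obtain ⟨⟨t1, t2, t3⟩, s1, s2, s3⟩ := q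
  obtain ⟨h1, h2, h3, h4, h5, h6, rfl⟩ := mem_D3.1 hq
  obtain ⟨d, rfl⟩ := Nat.exists_eq_add_of_lt h2
  obtain ⟨e, rfl⟩ := Nat.exists_eq_add_of_lt h3
  simp only [conj3, mem_D3, show t1 + d + 1 + e + 1 - (t1 + d + 1) = e + 1 by omega,
    show t1 + d + 1 - t1 = d + 1 by omega]
  exact ⟨h6, by omega, by omega, by omega, by omega, h1, by ring⟩

lemma conj3_conj3 {n : ℕ} {q : Idx3} (hq : q ∈ D3 n) : conj3 (conj3 q) = q := by
  obtain ⟨⟨t1, t2, t3⟩, s1, s2, s3⟩ := q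
  obtain ⟨h1, h2, h3, -⟩ := mem_D3.1 hq
  simp only [conj3, Prod.mk.injEq, true_and, and_true]
  omega

lemma conj12_mem_D12 {n : ℕ} {p : Idx12} (hp : p ∈ D12 n) : conj12 p ∈ D12 n := by
  obtain ⟨⟨w, x⟩, p⟩ := p
  obtain ⟨hw, hx, m, hm, rfl⟩ := mem_D12_iff_exists.1 hp
  exact mem_D12_iff_exists.2 ⟨hw, hx, m, conj2_mem_D2 hm, rfl⟩

lemma conj12_conj12 {n : ℕ} {p : Idx12} (hp : p ∈ D12 n) : conj12 (conj12 p) = p := by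
  obtain ⟨⟨w, x⟩, p⟩ := p
  obtain ⟨-, -, m, hm, -⟩ := mem_D12_iff_exists.1 hp
  simp only [conj12, conj2_conj2 hm]

lemma sum_comp_of_involutive_on {ι M : Type*} [AddCommMonoid M] {s : Finset ι} (σ : ι → ι)
    (hσ : ∀ i ∈ s, σ i ∈ s) (hσσ : ∀ i ∈ s, σ (σ i) = i) (f : ι → M) :
    ∑ i ∈ s, f (σ i) = ∑ i ∈ s, f i :=
  sum_nbij' σ σ hσ hσ hσσ hσσ fun _ _ => rfl

lemma sum_split_by_position {ι M : Type*} [AddCommMonoid M] (s : Finset ι) (x a b : ι → ℕ)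
    (hab : ∀ i ∈ s, a i < b i) (f : ι → M) :
    ∑ i ∈ s, f i = ∑ i ∈ s with x i < a i, f i + ∑ i ∈ s with x i = a i, f i
      + ∑ i ∈ s with a i < x i ∧ x i < b i, f i + ∑ i ∈ s with x i = b i, f i
      + ∑ i ∈ s with b i < x i, f i := by
  simp only [sum_filter, ← sum_add_distrib]
  refine sum_congr rfl fun i hi => ?_
  have := hab i hi
  split_ifs <;> first | omega | simp

section Sums

variable {M : Type*} [AddCommMonoid M] (n : ℕ)

lemma sum_D2_conj2 (f : Idx2 → M) : ∑ p ∈ D2 n, f (conj2 p) = ∑ p ∈ D2 n, f p :=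
  sum_comp_of_involutive_on _ (fun _ => conj2_mem_D2) (fun _ => conj2_conj2) f

lemma sum_D3_conj3 (f : Idx3 → M) : ∑ q ∈ D3 n, f (conj3 q) = ∑ q ∈ D3 n, f q :=
  sum_comp_of_involutive_on _ (fun _ => conj3_mem_D3) (fun _ => conj3_conj3) f

lemma sum_D12_conj12 (f : Idx12 → M) : ∑ p ∈ D12 n, f (conj12 p) = ∑ p ∈ D12 n, f p :=
  sum_comp_of_involutive_on _ (fun _ => conj12_mem_D12) (fun _ => conj12_conj12) f

variable (F : ℕ × ℕ → ℕ × ℕ → ℕ × ℕ → M)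

lemma sum_D12_filter_lt_fst :
    ∑ p ∈ D12 n with p.1.1 < p.2.1.1, F p.1 p.2.1 p.2.2
      = ∑ q ∈ D3 n, F (q.1.1, q.2.1) (q.1.2.1, q.1.2.2) (q.2.2.1, q.2.2.2) := by
  refine sum_nbij' (fun p => ((p.1.1, p.2.1.1, p.2.1.2), (p.1.2, p.2.2.1, p.2.2.2)))
    (fun q => ((q.1.1, q.2.1), (q.1.2.1, q.1.2.2), (q.2.2.1, q.2.2.2))) ?_ ?_
    (fun _ _ => rfl) (fun _ _ => rfl) (fun _ _ => rfl)
  · rintro ⟨⟨w, x⟩, ⟨u1, u2⟩, v1, v2⟩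
    simp only [mem_filter, mem_D12, mem_D3]
    omega
  · rintro ⟨⟨t1, t2, t3⟩, s1, s2, s3⟩
    simp only [mem_filter, mem_D12, mem_D3]
    omega

lemma sum_D12_filter_between :
    ∑ p ∈ D12 n with p.2.1.1 < p.1.1 ∧ p.1.1 < p.2.1.2, F p.1 p.2.1 p.2.2
      = ∑ q ∈ D3 n, F (q.1.2.1, q.2.2.1) (q.1.1, q.1.2.2) (q.2.1, q.2.2.2) := by
  refine sum_nbij' (fun p => ((p.2.1.1, p.1.1, p.2.1.2), (p.2.2.1, p.1.2, p.2.2.2)))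
    (fun q => ((q.1.2.1, q.2.2.1), (q.1.1, q.1.2.2), (q.2.1, q.2.2.2))) ?_ ?_
    (fun _ _ => rfl) (fun _ _ => rfl) (fun _ _ => rfl)
  · rintro ⟨⟨w, x⟩, ⟨u1, u2⟩, v1, v2⟩
    simp only [mem_filter, mem_D12, mem_D3]
    omega
  · rintro ⟨⟨t1, t2, t3⟩, s1, s2, s3⟩
    simp only [mem_filter, mem_D12, mem_D3]
    omega

lemma sum_D12_filter_snd_lt :
    ∑ p ∈ D12 n with p.2.1.2 < p.1.1, F p.1 p.2.1 p.2.2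
      = ∑ q ∈ D3 n, F (q.1.2.2, q.2.2.2) (q.1.1, q.1.2.1) (q.2.1, q.2.2.1) := by
  refine sum_nbij' (fun p => ((p.2.1.1, p.2.1.2, p.1.1), (p.2.2.1, p.2.2.2, p.1.2)))
    (fun q => ((q.1.2.2, q.2.2.2), (q.1.1, q.1.2.1), (q.2.1, q.2.2.1))) ?_ ?_
    (fun _ _ => rfl) (fun _ _ => rfl) (fun _ _ => rfl)
  · rintro ⟨⟨w, x⟩, ⟨u1, u2⟩, v1, v2⟩
    simp only [mem_filter, mem_D12, mem_D3]
    omega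
  · rintro ⟨⟨t1, t2, t3⟩, s1, s2, s3⟩
    simp only [mem_filter, mem_D12, mem_D3]
    omega

/-- When `w = u₁` the terms `wx + u₁v₁` merge into `u₁(x + v₁)`. -/
lemma sum_D12_filter_eq_fst :
    ∑ p ∈ D12 n with p.1.1 = p.2.1.1, F p.1 p.2.1 p.2.2
      = ∑ q ∈ (D2 n).sigma (fun p => Ico 1 p.2.1),
          F (q.1.1.1, q.1.2.1 - q.2) q.1.1 (q.2, q.1.2.2) := by
  refine sum_nbij' (fun p => ⟨(p.2.1, (p.1.2 + p.2.2.1, p.2.2.2)), p.2.2.1⟩)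
    (fun q => ((q.1.1.1, q.1.2.1 - q.2), q.1.1, (q.2, q.1.2.2))) ?_ ?_ ?_ ?_ ?_
  · rintro ⟨⟨w, x⟩, ⟨u1, u2⟩, v1, v2⟩
    simp only [mem_filter, mem_D12, mem_sigma, mem_D2, mem_Ico]
    rintro ⟨⟨_, _, _, _, _, _, rfl⟩, rfl⟩
    refine ⟨⟨by omega, by omega, by omega, by omega, by ring⟩, by omega, by omega⟩
  · rintro ⟨⟨⟨u1, u2⟩, W, v2⟩, v1⟩
    simp only [mem_filter, mem_D12, mem_sigma, mem_D2, mem_Ico]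
    rintro ⟨⟨_, _, _, _, rfl⟩, _, hW⟩
    obtain ⟨x, rfl⟩ := Nat.exists_eq_add_of_lt hW
    simp only [show v1 + x + 1 - v1 = x + 1 by omega, and_true]
    exact ⟨by omega, by omega, by omega, by omega, by omega, by omega, by ring⟩
  · rintro ⟨⟨w, x⟩, ⟨u1, u2⟩, v1, v2⟩
    simp only [mem_filter, mem_D12]
    rintro ⟨-, rfl⟩
    simp
  · rintro ⟨⟨⟨u1, u2⟩, W, v2⟩, v1⟩
    simp only [mem_sigma, mem_Ico]
    rintro ⟨-, -, hW⟩
    simp only [Nat.sub_add_cancel hW.le]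
  · rintro ⟨⟨w, x⟩, ⟨u1, u2⟩, v1, v2⟩
    simp only [mem_filter]
    rintro ⟨-, rfl⟩
    simp

lemma sum_D12_filter_eq_snd :
    ∑ p ∈ D12 n with p.1.1 = p.2.1.2, F p.1 p.2.1 p.2.2
      = ∑ q ∈ (D2 n).sigma (fun p => Ico 1 p.2.2),
          F (q.1.1.2, q.1.2.2 - q.2) q.1.1 (q.1.2.1, q.2) := by
  refine sum_nbij' (fun p => ⟨(p.2.1, (p.2.2.1, p.1.2 + p.2.2.2)), p.2.2.2⟩)
    (fun q => ((q.1.1.2, q.1.2.2 - q.2), q.1.1, (q.1.2.1, q.2))) ?_ ?_ ?_ ?_ ?_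
  · rintro ⟨⟨w, x⟩, ⟨u1, u2⟩, v1, v2⟩
    simp only [mem_filter, mem_D12, mem_sigma, mem_D2, mem_Ico]
    rintro ⟨⟨_, _, _, _, _, _, rfl⟩, rfl⟩
    refine ⟨⟨by omega, by omega, by omega, by omega, by ring⟩, by omega, by omega⟩
  · rintro ⟨⟨⟨u1, u2⟩, v1, W⟩, v2⟩
    simp only [mem_filter, mem_D12, mem_sigma, mem_D2, mem_Ico]
    rintro ⟨⟨_, _, _, _, rfl⟩, _, hW⟩
    obtain ⟨x, rfl⟩ := Nat.exists_eq_add_of_lt hW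
    simp only [show v2 + x + 1 - v2 = x + 1 by omega, and_true]
    exact ⟨by omega, by omega, by omega, by omega, by omega, by omega, by ring⟩
  · rintro ⟨⟨w, x⟩, ⟨u1, u2⟩, v1, v2⟩
    simp only [mem_filter, mem_D12]
    rintro ⟨-, rfl⟩
    simp
  · rintro ⟨⟨⟨u1, u2⟩, v1, W⟩, v2⟩
    simp only [mem_sigma, mem_Ico]
    rintro ⟨-, -, hW⟩
    simp only [Nat.sub_add_cancel hW.le]
  · rintro ⟨⟨w, x⟩, ⟨u1, u2⟩, v1, v2⟩
    simp only [mem_filter]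
    rintro ⟨-, rfl⟩
    simp

/-- The stuffle decomposition of `g_1 · g_{k₁,k₂}`, according to the position of `w`
relative to `u₁ < u₂`. -/
lemma sum_D12_eq :
    ∑ p ∈ D12 n, F p.1 p.2.1 p.2.2
      = ∑ q ∈ D3 n, F (q.1.1, q.2.1) (q.1.2.1, q.1.2.2) (q.2.2.1, q.2.2.2)
        + ∑ q ∈ (D2 n).sigma (fun p => Ico 1 p.2.1),
            F (q.1.1.1, q.1.2.1 - q.2) q.1.1 (q.2, q.1.2.2)
        + ∑ q ∈ D3 n, F (q.1.2.1, q.2.2.1) (q.1.1, q.1.2.2) (q.2.1, q.2.2.2)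
        + ∑ q ∈ (D2 n).sigma (fun p => Ico 1 p.2.2),
            F (q.1.1.2, q.1.2.2 - q.2) q.1.1 (q.1.2.1, q.2)
        + ∑ q ∈ D3 n, F (q.1.2.2, q.2.2.2) (q.1.1, q.1.2.1) (q.2.1, q.2.2.1) := by
  rw [sum_split_by_position (D12 n) (fun p => p.1.1) (fun p => p.2.1.1) (fun p => p.2.1.2),
    sum_D12_filter_lt_fst, sum_D12_filter_eq_fst, sum_D12_filter_between, sum_D12_filter_eq_snd,
    sum_D12_filter_snd_lt]
  rintro ⟨⟨w, x⟩, ⟨u1, u2⟩, v1, v2⟩ hp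
  exact (mem_D12.1 hp).2.2.2.1

end Sums

lemma exists_sum_Ico_pow_eq {A : ℕ} (hA : A ≠ 0) :
    ∃ s : ℕ → ℚ, ∀ W : ℕ,
      ∑ v ∈ Ico 1 W, (v : ℚ) ^ A = ∑ j ∈ range (A + 1), s j * (W : ℚ) ^ (j + 1) := by
  refine ⟨fun j => bernoulli (A - j) * (A + 1).choose (A - j) / (A + 1), fun W => ?_⟩
  have hzero : ∑ v ∈ Ico 1 W, (v : ℚ) ^ A = ∑ v ∈ range W, (v : ℚ) ^ A := by
    rw [range_eq_Ico]
    refine sum_subset (Ico_subset_Ico_left zero_le_one) fun v hv hv' => ?_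
    obtain rfl : v = 0 := by simp only [mem_Ico] at hv hv'; omega
    simp [hA]
  rw [hzero, sum_range_pow, ← sum_range_reflect]
  refine sum_congr rfl fun j hj => ?_
  rw [mem_range] at hj
  rw [show A + 1 - 1 - j = A - j by omega, show A + 1 - (A - j) = j + 1 by omega]
  ring

/-- `gb2` without the factorial normalisation, with the exponents `k - 1` of the `v`'s as
parameters. -/
noncomputable def gbRaw2 (e1 e2 f1 f2 : ℕ) : PowerSeries ℚ :=
  mk fun n => ∑ p ∈ D2 n,
    (p.1.1 : ℚ) ^ e1 * (p.1.2 : ℚ) ^ e2 * (p.2.1 : ℚ) ^ f1 * (p.2.2 : ℚ) ^ f2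

noncomputable def gRaw3 (f1 f2 f3 : ℕ) : PowerSeries ℚ :=
  mk fun n => ∑ q ∈ D3 n, (q.2.1 : ℚ) ^ f1 * (q.2.2.1 : ℚ) ^ f2 * (q.2.2.2 : ℚ) ^ f3

lemma gbRaw2_eq_smul_gb2 (e1 e2 f1 f2 : ℕ) :
    gbRaw2 e1 e2 f1 f2
      = ((e1.factorial * e2.factorial * f1.factorial * f2.factorial : ℕ) : ℚ)
        • gb2 e1 e2 (f1 + 1) (f2 + 1) := by
  ext n
  simp only [gbRaw2, gb2, D2, coeff_mk, map_smul, sum_filter, sum_product, smul_eq_mul, mul_sum,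
    Nat.add_sub_cancel]
  refine sum_congr rfl fun _ _ => sum_congr rfl fun _ _ => sum_congr rfl fun _ _ =>
    sum_congr rfl fun _ _ => ?_
  split_ifs
  · push_cast
    field_simp
  · simp

lemma gRaw3_eq_smul_g3 (f1 f2 f3 : ℕ) :
    gRaw3 f1 f2 f3
      = ((f1.factorial * f2.factorial * f3.factorial : ℕ) : ℚ) • g3 (f1 + 1) (f2 + 1) (f3 + 1) := by
  ext n
  simp only [gRaw3, g3, gb3, D3, coeff_mk, map_smul, sum_filter, sum_product, smul_eq_mul, mul_sum,
    Nat.add_sub_cancel]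
  refine sum_congr rfl fun _ _ => sum_congr rfl fun _ _ => sum_congr rfl fun _ _ =>
    sum_congr rfl fun _ _ => sum_congr rfl fun _ _ => sum_congr rfl fun _ _ => ?_
  split_ifs
  · simp only [Nat.factorial_zero, pow_zero]
    push_cast
    field_simp
  · simp

section Evaluation

variable (n : ℕ) {A B : ℕ}

lemma sum_D12_pow_eq_coeff (s t : ℕ → ℚ)
    (hs : ∀ W : ℕ, ∑ v ∈ Ico 1 W, (v : ℚ) ^ A = ∑ j ∈ range (A + 1), s j * W ^ (j + 1))
    (ht : ∀ W : ℕ, ∑ v ∈ Ico 1 W, (v : ℚ) ^ B = ∑ j ∈ range (B + 1), t j * W ^ (j + 1)) :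
    ∑ p ∈ D12 n, (p.2.2.1 : ℚ) ^ A * (p.2.2.2 : ℚ) ^ B
      = coeff n (gRaw3 0 A B + ∑ j ∈ range (A + 1), s j • gbRaw2 0 0 (j + 1) B + gRaw3 A 0 B
          + ∑ j ∈ range (B + 1), t j • gbRaw2 0 0 A (j + 1) + gRaw3 A B 0) := by
  have merge_fst : ∑ q ∈ (D2 n).sigma (fun p => Ico 1 p.2.1), (q.2 : ℚ) ^ A * (q.1.2.2 : ℚ) ^ B
      = ∑ j ∈ range (A + 1), s j * ∑ p ∈ D2 n, (p.2.1 : ℚ) ^ (j + 1) * (p.2.2 : ℚ) ^ B := by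
    simp_rw [sum_sigma, ← sum_mul, hs, sum_mul, mul_sum]
    rw [sum_comm]
    exact sum_congr rfl fun _ _ => sum_congr rfl fun _ _ => by ring
  have merge_snd : ∑ q ∈ (D2 n).sigma (fun p => Ico 1 p.2.2), (q.1.2.1 : ℚ) ^ A * (q.2 : ℚ) ^ B
      = ∑ j ∈ range (B + 1), t j * ∑ p ∈ D2 n, (p.2.1 : ℚ) ^ A * (p.2.2 : ℚ) ^ (j + 1) := by
    simp_rw [sum_sigma, ← mul_sum, ht, mul_sum]
    rw [sum_comm]
    exact sum_congr rfl fun _ _ => sum_congr rfl fun _ _ => by ring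
  rw [sum_D12_eq n (fun _ _ v => (v.1 : ℚ) ^ A * (v.2 : ℚ) ^ B), merge_fst, merge_snd]
  simp only [map_add, map_sum, map_smul, gRaw3, gbRaw2, coeff_mk, smul_eq_mul, pow_zero, one_mul,
    mul_one]

lemma sum_sigma_Ico_add_sum_sigma_Ico :
    ∑ q ∈ (D2 n).sigma (fun p => Ico 1 p.2.1), ((q.1.1.2 : ℚ) - q.1.1.1) ^ A * (q.1.1.1 : ℚ) ^ B
      + ∑ q ∈ (D2 n).sigma (fun p => Ico 1 p.2.2),
          ((q.1.1.2 : ℚ) - q.1.1.1) ^ A * (q.1.1.1 : ℚ) ^ B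
      = ∑ p ∈ D2 n, (p.1.2 : ℚ) * (p.2.1 : ℚ) ^ A * (p.2.2 : ℚ) ^ B
        - 2 * ∑ p ∈ D2 n, (p.2.1 : ℚ) ^ A * (p.2.2 : ℚ) ^ B := by
  -- the multiplicity `(v₁ - 1) + (v₂ - 1)` of the merged terms becomes `u₂ - 2` after conjugation
  rw [sum_sigma, sum_sigma, ← sum_add_distrib, mul_sum, ← sum_sub_distrib, ← sum_D2_conj2 n]
  refine sum_congr rfl ?_
  rintro ⟨⟨u1, u2⟩, v1, v2⟩ hp
  obtain ⟨h1, h2, -⟩ := mem_D2.1 hp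
  simp only [conj2, sum_const, Nat.card_Ico, nsmul_eq_mul]
  push_cast [Nat.sub_sub, Nat.cast_sub (show u1 + 1 ≤ u2 from h2), Nat.cast_sub h1]
  ring

lemma sum_D12_sub_pow_eq_coeff :
    ∑ p ∈ D12 n, ((p.2.1.2 : ℚ) - p.2.1.1) ^ A * (p.2.1.1 : ℚ) ^ B
      = coeff n (∑ i ∈ range (B + 1), (B.choose i : ℚ) • gRaw3 A i (B - i)
          + ∑ i ∈ range (A + 1), (A.choose i : ℚ) • gRaw3 i (A - i) B
          + gRaw3 0 A B + gbRaw2 0 1 A B - (2 : ℚ) • gbRaw2 0 0 A B) := by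
  have lt_fst : ∑ q ∈ D3 n, ((q.1.2.2 : ℚ) - q.1.2.1) ^ A * (q.1.2.1 : ℚ) ^ B
      = ∑ i ∈ range (B + 1), (B.choose i : ℚ) *
          ∑ q ∈ D3 n, (q.2.1 : ℚ) ^ A * (q.2.2.1 : ℚ) ^ i * (q.2.2.2 : ℚ) ^ (B - i) := by
    rw [← sum_D3_conj3 n]
    simp only [mul_sum]
    rw [sum_comm]
    refine sum_congr rfl ?_
    rintro ⟨⟨t1, t2, t3⟩, s1, s2, s3⟩ -
    simp only [conj3]
    push_cast
    rw [show (s1 + s2 + s3 : ℚ) - (s2 + s3) = s1 by ring, add_pow, mul_sum]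
    exact sum_congr rfl fun _ _ => by ring
  have between : ∑ q ∈ D3 n, ((q.1.2.2 : ℚ) - q.1.1) ^ A * (q.1.1 : ℚ) ^ B
      = ∑ i ∈ range (A + 1), (A.choose i : ℚ) *
          ∑ q ∈ D3 n, (q.2.1 : ℚ) ^ i * (q.2.2.1 : ℚ) ^ (A - i) * (q.2.2.2 : ℚ) ^ B := by
    rw [← sum_D3_conj3 n]
    simp only [mul_sum]
    rw [sum_comm]
    refine sum_congr rfl ?_
    rintro ⟨⟨t1, t2, t3⟩, s1, s2, s3⟩ -
    simp only [conj3]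
    push_cast
    rw [show (s1 + s2 + s3 : ℚ) - s3 = s1 + s2 by ring, add_pow, sum_mul]
    exact sum_congr rfl fun _ _ => by ring
  have snd_lt : ∑ q ∈ D3 n, ((q.1.2.1 : ℚ) - q.1.1) ^ A * (q.1.1 : ℚ) ^ B
      = ∑ q ∈ D3 n, (q.2.2.1 : ℚ) ^ A * (q.2.2.2 : ℚ) ^ B := by
    rw [← sum_D3_conj3 n]
    refine sum_congr rfl ?_
    rintro ⟨⟨t1, t2, t3⟩, s1, s2, s3⟩ -
    simp only [conj3]
    push_cast
    ring
  rw [sum_D12_eq n (fun _ u _ => ((u.2 : ℚ) - u.1) ^ A * (u.1 : ℚ) ^ B)]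
  simp only [map_add, map_sub, map_sum, map_smul, gRaw3, gbRaw2, coeff_mk, smul_eq_mul, pow_zero,
    one_mul, mul_one, pow_one, lt_fst, between, snd_lt]
  linear_combination sum_sigma_Ico_add_sum_sigma_Ico n

/-- Two evaluations of the coefficients of `g_1 · g_{A+1,B+1}`: by the stuffle product, and by the
stuffle product after conjugating the partitions of the second factor. -/
theorem gRaw_double_shuffle (s t : ℕ → ℚ)
    (hs : ∀ W : ℕ, ∑ v ∈ Ico 1 W, (v : ℚ) ^ A = ∑ j ∈ range (A + 1), s j * W ^ (j + 1))
    (ht : ∀ W : ℕ, ∑ v ∈ Ico 1 W, (v : ℚ) ^ B = ∑ j ∈ range (B + 1), t j * W ^ (j + 1)) :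
    gRaw3 0 A B + ∑ j ∈ range (A + 1), s j • gbRaw2 0 0 (j + 1) B + gRaw3 A 0 B
        + ∑ j ∈ range (B + 1), t j • gbRaw2 0 0 A (j + 1) + gRaw3 A B 0
      = ∑ i ∈ range (B + 1), (B.choose i : ℚ) • gRaw3 A i (B - i)
        + ∑ i ∈ range (A + 1), (A.choose i : ℚ) • gRaw3 i (A - i) B
        + gRaw3 0 A B + gbRaw2 0 1 A B - (2 : ℚ) • gbRaw2 0 0 A B := by
  ext n
  rw [← sum_D12_pow_eq_coeff n s t hs ht, ← sum_D12_sub_pow_eq_coeff, ← sum_D12_conj12]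
  refine sum_congr rfl ?_
  rintro ⟨⟨w, x⟩, ⟨u1, u2⟩, v1, v2⟩ hp
  obtain ⟨-, -, -, hu, -⟩ := mem_D12.1 hp
  simp only [conj12, conj2]
  push_cast [Nat.cast_sub hu.le]
  ring

end Evaluation

section Span

variable {N : ℕ}

lemma gsh3_mem_span {a b c : ℕ} (ha : 1 ≤ a) (hb : 1 ≤ b) (hc : 1 ≤ c) (hN : a + b + c ≤ N) :
    gsh3 a b c ∈ Submodule.span ℚ (gshSpanSet N) :=
  Submodule.subset_span (Or.inr ⟨a, b, c, ha, hb, hc, hN, rfl⟩)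

lemma g2_mem_span {a b : ℕ} (ha : 2 ≤ a) (hb : 1 ≤ b) (hN : a + b ≤ N) :
    g2 a b ∈ Submodule.span ℚ (gshSpanSet N) := by
  have hreg : gsh2 a b = g2 a b := by simp [gsh2, show a ≠ 1 by omega]
  exact hreg ▸ Submodule.subset_span (Or.inl (Or.inr ⟨a, b, by omega, hb, hN, rfl⟩))

lemma g3_mem_span {a b c : ℕ} (ha : 2 ≤ a) (hb : 2 ≤ b) (hc : 1 ≤ c) (hN : a + b + c ≤ N) :
    g3 a b c ∈ Submodule.span ℚ (gshSpanSet N) := by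
  have hab : a * b ≠ 1 := fun h => by have := Nat.eq_one_of_mul_eq_one_right h; omega
  have hreg : gsh3 a b c = g3 a b c := by simp [gsh3, show a ≠ 1 by omega, show b ≠ 1 by omega, hab]
  exact hreg ▸ gsh3_mem_span (by omega) (by omega) hc hN

lemma gbRaw2_mem_span {f1 f2 : ℕ} (hf1 : 1 ≤ f1) (hN : f1 + f2 + 2 ≤ N) :
    gbRaw2 0 0 f1 f2 ∈ Submodule.span ℚ (gshSpanSet N) := by
  rw [gbRaw2_eq_smul_gb2]
  exact Submodule.smul_mem _ _ (g2_mem_span (by omega) (by omega) (by omega))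

lemma gRaw3_mem_span {f1 f2 f3 : ℕ} (hf1 : 1 ≤ f1) (hf2 : 1 ≤ f2) (hN : f1 + f2 + f3 + 3 ≤ N) :
    gRaw3 f1 f2 f3 ∈ Submodule.span ℚ (gshSpanSet N) := by
  rw [gRaw3_eq_smul_g3]
  exact Submodule.smul_mem _ _ (g3_mem_span (by omega) (by omega) (by omega) (by omega))

lemma gbRaw2_zero_one_add_gRaw3_mem_span {A B : ℕ} (hA : A ≠ 0) (hB : B ≠ 0) :
    gbRaw2 0 1 A B + gRaw3 0 A B + gRaw3 A 0 B ∈ Submodule.span ℚ (gshSpanSet (A + B + 3)) := by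
  obtain ⟨s, hs⟩ := exists_sum_Ico_pow_eq hA
  obtain ⟨t, ht⟩ := exists_sum_Ico_pow_eq hB
  have key := gRaw_double_shuffle s t hs ht
  -- split off the binomial terms `gRaw3 A 0 B` and `gRaw3 0 A B`, the only ones outside the span
  rw [← add_sum_erase (range (B + 1)) (fun i => (B.choose i : ℚ) • gRaw3 A i (B - i))
      (mem_range.2 B.succ_pos), ← add_sum_erase (range (A + 1))
      (fun i => (A.choose i : ℚ) • gRaw3 i (A - i) B) (mem_range.2 A.succ_pos),
    ← add_sum_erase ((range (A + 1)).erase 0) _ (mem_erase.2 ⟨hA, self_mem_range_succ A⟩)] at key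
  simp only [Nat.choose_zero_right, Nat.choose_self, Nat.sub_zero, Nat.sub_self, Nat.cast_one,
    one_smul] at key
  have solved : gbRaw2 0 1 A B + gRaw3 0 A B + gRaw3 A 0 B = gRaw3 A B 0
      + ∑ j ∈ range (A + 1), s j • gbRaw2 0 0 (j + 1) B
      + ∑ j ∈ range (B + 1), t j • gbRaw2 0 0 A (j + 1) + (2 : ℚ) • gbRaw2 0 0 A B
      - ∑ i ∈ (range (B + 1)).erase 0, (B.choose i : ℚ) • gRaw3 A i (B - i)
      - ∑ i ∈ ((range (A + 1)).erase 0).erase A, (A.choose i : ℚ) • gRaw3 i (A - i) B := by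
    linear_combination (norm := module) -key
  rw [solved]
  refine sub_mem (sub_mem (add_mem (add_mem (add_mem ?_ ?_) ?_) ?_) ?_) ?_
  · exact gRaw3_mem_span (by omega) (by omega) (by omega)
  · refine Submodule.sum_mem _ fun j hj => Submodule.smul_mem _ _ (gbRaw2_mem_span (by omega) ?_)
    simp only [mem_range] at hj
    omega
  · refine Submodule.sum_mem _ fun j hj => Submodule.smul_mem _ _ (gbRaw2_mem_span (by omega) ?_)
    simp only [mem_range] at hj
    omega
  · exact Submodule.smul_mem _ _ (gbRaw2_mem_span (by omega) (by omega))
  · refine Submodule.sum_mem _ fun i hi => Submodule.smul_mem _ _ ?_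
    simp only [mem_erase, mem_range] at hi
    exact gRaw3_mem_span (by omega) (by omega) (by omega)
  · refine Submodule.sum_mem _ fun i hi => Submodule.smul_mem _ _ ?_
    simp only [mem_erase, mem_range] at hi
    exact gRaw3_mem_span (by omega) (by omega) (by omega)

lemma gb2_zero_one_add_g3_mem_span {k1 k2 : ℕ} (h1 : 2 ≤ k1) (h2 : 2 ≤ k2) :
    gb2 0 1 k1 k2 + g3 1 k1 k2 + g3 k1 1 k2 ∈ Submodule.span ℚ (gshSpanSet (k1 + k2 + 1)) := by
  obtain ⟨A, rfl⟩ : ∃ A, k1 = A + 1 := ⟨k1 - 1, by omega⟩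
  obtain ⟨B, rfl⟩ : ∃ B, k2 = B + 1 := ⟨k2 - 1, by omega⟩
  have h := gbRaw2_zero_one_add_gRaw3_mem_span (A := A) (B := B) (by omega) (by omega)
  simp only [gbRaw2_eq_smul_gb2, gRaw3_eq_smul_g3, Nat.factorial_zero, Nat.factorial_one, one_mul,
    mul_one, zero_add, ← smul_add] at h
  rwa [Submodule.smul_mem_iff _ (by positivity), show A + B + 3 = A + 1 + (B + 1) + 1 by ring] at h

lemma gsh3_add_gsh3_one {k1 k2 : ℕ} (hk1 : k1 ≠ 1) :
    gsh3 k1 1 k2 + gsh3 1 k1 k2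
      = g3 k1 1 k2 + g3 1 k1 k2 + (1 / 2 : ℚ) • gb2 0 1 k1 k2 - g2 k1 k2 := by
  simp only [gsh3, hk1, mul_one, one_mul, if_true, if_false, zero_smul, add_zero]
  module

end Span

end QSeries

open QSeries

/-- `g^{(0,1)}_{k₁,k₂}` lies in the ℚ-span of the `g^sh` of weight ≤ k₁+k₂+1. -/
theorem stmt_14 (k1 k2 : ℕ) (h1 : 2 ≤ k1) (h2 : 2 ≤ k2) :
    gb2 0 1 k1 k2 ∈ Submodule.span ℚ (gshSpanSet (k1 + k2 + 1)) := by
  have hreg : gb2 0 1 k1 k2 = (2 : ℚ) • (gb2 0 1 k1 k2 + g3 1 k1 k2 + g3 k1 1 k2)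
      - (2 : ℚ) • (gsh3 k1 1 k2 + gsh3 1 k1 k2 + g2 k1 k2) := by
    rw [gsh3_add_gsh3_one (by omega)]
    module
  rw [hreg]
  refine sub_mem (Submodule.smul_mem _ _ (gb2_zero_one_add_g3_mem_span h1 h2))
    (Submodule.smul_mem _ _ (add_mem (add_mem ?_ ?_) (g2_mem_span h1 (by omega) (by omega))))
  · exact gsh3_mem_span (by omega) le_rfl (by omega) (by omega)
  · exact gsh3_mem_span le_rfl (by omega) (by omega) (by omega)
end
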